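/- arXiv:1506.06069 — 5 statements merged into one kernel-verified Lean document; each statement's English description precedes it below -/
import Mathlib

section
/- Let U be a regular subgroup of G not contained in S_h × S_n × {id}, let (p^j)_{j ∈ P^U} be a system of representatives of the U-orbits of P, let (φ_*, ψ_*, ρ_0) ∈ U, and let C be a U-consistent social choice correspondence. For j ∈ P_1^U, let A^1_C(p^j) = {(y,z) ∈ C(p^j) × C(p^{j (φ_*,ψ_*,ρ_0)}) : z ≠ ψ_*(y)}; for j ∈ P_2^U, let ψ_j be the unique permutation in S_n such that Stab_U(p^j) ⊆ (S_h × {id} × {id}) ∪ (S_h × {ψ_j} × {ρ_0}), and let A^2_C(p^j) = {x ∈ C(p^j) : ψ_j(x) ≠ x}. Suppose chosen, for each j ∈ P_1^U, a pair (y_j, z_j) ∈ A^1_C(p^j), and for each j ∈ P_2^U, an element x_j ∈ A^2_C(p^j). Then there exists a unique resolute U-consistent refinement f of C such that f(p^j) = {y_j} and f(p^{j (φ_*,ψ_*,ρ_0)}) = {z_j} for all j ∈ P_1^U, and f(p^j) = {x_j} for all j ∈ P_2^U. -/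
/-!
Common framework: preferences on `n ≥ 2` alternatives (`Fin n`) expressed by `h ≥ 2`
individuals (`Fin h`).  Following the paper, a linear order `q ∈ L(N)` is identified with
the permutation of `Fin n` sending each rank position (`0` = best) to the alternative
occupying that position.
-/

/-- A preference relation (a linear order on the set `Fin n` of alternatives), identified
with the permutation sending each rank position (`0` = best) to the alternative at
that position. -/
abbrev Pref (n : ℕ) := Equiv.Perm (Fin n)

/-- `x ⪰_q y` : alternative `x` is weakly preferred to `y` in `q`. -/
def prefGE {n : ℕ} (q : Pref n) (x y : Fin n) : Prop := q.symm x ≤ q.symm y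

/-- `x ≻_q y` : alternative `x` is strictly preferred to `y` in `q`. -/
def prefGT {n : ℕ} (q : Pref n) (x y : Fin n) : Prop := q.symm x < q.symm y

instance {n : ℕ} (q : Pref n) (x y : Fin n) : Decidable (prefGT q x y) :=
  inferInstanceAs (Decidable (q.symm x < q.symm y))

/-- A preference profile: one preference relation for each individual. -/
abbrev Profile (n h : ℕ) := Fin h → Pref n

/-- A social choice correspondence (the nonemptiness of its values is `IsSCC`). -/
abbrev SCC (n h : ℕ) := Profile n h → Set (Fin n)

/-- `C` has nonempty values, i.e. `C` really is a social choice correspondence. -/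
def IsSCC {n h : ℕ} (C : SCC n h) : Prop := ∀ p, (C p).Nonempty

/-- `C` is resolute: it always selects exactly one alternative. -/
def Resolute {n h : ℕ} (C : SCC n h) : Prop := ∀ p, ∃ x, C p = {x}

/-- `C'` is a refinement of `C`. -/
def Refines {n h : ℕ} (C' C : SCC n h) : Prop := ∀ p, C' p ⊆ C p

/-- The order-reversing permutation `ρ₀ : r ↦ n - r + 1`. -/
def rho0 (n : ℕ) : Equiv.Perm (Fin n) := Fin.revPerm

/-- The profile `p^{(id,id,ρ₀)}` obtained from `p` by reversing every individual
preference. -/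
def revProfile {n h : ℕ} (p : Profile n h) : Profile n h := fun i => p i * rho0 n

/-- `C` is immune to the reversal bias. -/
def Immune {n h : ℕ} (C : SCC n h) : Prop :=
  ∀ (p : Profile n h) (x : Fin n), C p = {x} → C (revProfile p) ≠ C p

/-- `Y` is a partition: nonempty, pairwise disjoint, covering blocks. -/
def IsPartition {α : Type*} {s : ℕ} (Y : Fin s → Finset α) : Prop :=
  (∀ j, (Y j).Nonempty) ∧ (∀ j k, j ≠ k → Disjoint (Y j) (Y k)) ∧ (∀ a, ∃ j, a ∈ Y j)

/-- The ambient group `S_h × S_n × S_n` (the third component is meant to range in `Ω`). -/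
abbrev Amb (n h : ℕ) := Equiv.Perm (Fin h) × Equiv.Perm (Fin n) × Equiv.Perm (Fin n)

/-- The action `p ↦ p^g` of `g = (φ,ψ,ρ)` on profiles. -/
def gact {n h : ℕ} (g : Amb n h) (p : Profile n h) : Profile n h :=
  fun i => g.2.1 * p (g.1⁻¹ i) * g.2.2

/-- The group `Ω = {id, ρ₀}`. -/
def OmegaGrp (n : ℕ) : Subgroup (Equiv.Perm (Fin n)) := Subgroup.zpowers (rho0 n)

/-- The group `G = S_h × S_n × Ω`. -/
def bigG (n h : ℕ) : Subgroup (Amb n h) :=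
  (⊤ : Subgroup (Equiv.Perm (Fin h))).prod
    ((⊤ : Subgroup (Equiv.Perm (Fin n))).prod (OmegaGrp n))

/-- `U`-consistency of a social choice correspondence `C`: for every `p` and every
`(φ,ψ,ρ) ∈ U`, if `ρ = id` then `C(p^{(φ,ψ,id)}) = ψ C(p)`, and if `ρ = ρ₀` and
`|C(p)| = 1` then `C(p^{(φ,ψ,ρ₀)}) ≠ ψ C(p)`. -/
def UConsistent {n h : ℕ} (U : Subgroup (Amb n h)) (C : SCC n h) : Prop :=
  ∀ (p : Profile n h), ∀ g ∈ U,
    (g.2.2 = 1 → C (gact g p) = g.2.1 '' C p) ∧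
    (g.2.2 = rho0 n → ∀ x : Fin n, C p = {x} → C (gact g p) ≠ g.2.1 '' C p)

/-- A subgroup `U` of `G` is regular: for every profile `p` there is `ψ⋆ ∈ S_n`
conjugate to `ρ₀` with `Stab_U(p) ⊆ (S_h × {id} × {id}) ∪ (S_h × {ψ⋆} × {ρ₀})`. -/
def RegularSubgroup {n h : ℕ} (U : Subgroup (Amb n h)) : Prop :=
  ∀ p : Profile n h, ∃ ψs : Equiv.Perm (Fin n), IsConj (rho0 n) ψs ∧
    ∀ g ∈ U, gact g p = p →
      (g.2.1 = 1 ∧ g.2.2 = 1) ∨ (g.2.1 = ψs ∧ g.2.2 = rho0 n)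

/-- `p` and `q` lie in the same `U`-orbit. -/
def SameOrbit {n h : ℕ} (U : Subgroup (Amb n h)) (p q : Profile n h) : Prop :=
  ∃ g ∈ U, gact g p = q

/-- `S` is a system of representatives of the `U`-orbits: every profile is in the
orbit of exactly one element of `S`. -/
def IsRepSystem {n h : ℕ} (U : Subgroup (Amb n h)) (S : Set (Profile n h)) : Prop :=
  ∀ p : Profile n h, ∃! r, r ∈ S ∧ SameOrbit U r p

/-- The stabilizer of `r` in `U` is contained in `S_h × S_n × {id}` (i.e. the
`U`-orbit of `r` belongs to `P₁ᵁ`). -/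
def StabIn1 {n h : ℕ} (U : Subgroup (Amb n h)) (r : Profile n h) : Prop :=
  ∀ g ∈ U, gact g r = r → g.2.2 = 1
lemma rho0_mul_self (n : ℕ) : rho0 n * rho0 n = 1 := by
  ext i
  simp [rho0]

lemma rho0_inv (n : ℕ) : (rho0 n)⁻¹ = rho0 n :=
  inv_eq_of_mul_eq_one_left (rho0_mul_self n)

lemma rho0_ne_one {n : ℕ} (hn : 2 ≤ n) : rho0 n ≠ 1 := by
  intro hc
  have h := congrArg (fun σ : Equiv.Perm (Fin n) => (σ ⟨0, by omega⟩).val) hc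
  simp [rho0, Fin.val_rev] at h
  omega

lemma gact_one {n h : ℕ} (p : Profile n h) : gact (1 : Amb n h) p = p := by
  funext i
  simp [gact]

lemma gact_mul {n h : ℕ} (g g' : Amb n h) (hc : g.2.2 * g'.2.2 = g'.2.2 * g.2.2)
    (p : Profile n h) : gact (g * g') p = gact g (gact g' p) := by
  funext i
  show (g.2.1 * g'.2.1) * p ((g.1 * g'.1)⁻¹ i) * (g.2.2 * g'.2.2)
      = g.2.1 * (g'.2.1 * p (g'.1⁻¹ (g.1⁻¹ i)) * g'.2.2) * g.2.2
  rw [hc, mul_inv_rev]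
  simp [mul_assoc, Equiv.Perm.mul_apply]

def Dpred {n h : ℕ} (U : Subgroup (Amb n h)) (S : Set (Profile n h)) (gs : Amb n h)
    (y z x : Profile n h → Fin n) (p : Profile n h) (a : Fin n) : Prop :=
  ∃ r, r ∈ S ∧ ∃ g, g ∈ U ∧ g.2.2 = 1 ∧
    ((StabIn1 U r ∧ gact g r = p ∧ a = g.2.1 (y r)) ∨
     (StabIn1 U r ∧ gact g (gact gs r) = p ∧ a = g.2.1 (z r)) ∨
     (¬ StabIn1 U r ∧ gact g r = p ∧ a = g.2.1 (x r)))

/-- Proposition `fu-min-ex`: for a regular `U` not contained in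
`S_h × S_n × {id}`, a system `S` of representatives of the `U`-orbits, a fixed
`gs = (φ*,ψ*,ρ₀) ∈ U`, and a `U`-consistent scc `C`, any choice of pairs
`(y r, z r) ∈ A¹_C(r)` on the orbits of `P₁ᵁ` and of elements `x r ∈ A²_C(r)` on the
orbits of `P₂ᵁ` extends to a unique resolute `U`-consistent refinement of `C`.
Here `ψj r` is the unique permutation appearing in the stabilizer condition for
representatives of orbits in `P₂ᵁ`. -/

theorem statement12 {n h : ℕ} (hh : 2 ≤ h) (hn : 2 ≤ n)
    (U : Subgroup (Amb n h)) (hUG : U ≤ bigG n h) (hreg : RegularSubgroup U)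
    (hU2 : ∃ g ∈ U, g.2.2 ≠ 1)
    (S : Set (Profile n h)) (hS : IsRepSystem U S)
    (gs : Amb n h) (hgs : gs ∈ U) (hgs3 : gs.2.2 = rho0 n)
    (C : SCC n h) (hC : IsSCC C) (hcons : UConsistent U C)
    (ψj : Profile n h → Equiv.Perm (Fin n))
    (hψj : ∀ r ∈ S, ¬ StabIn1 U r → ∀ g ∈ U, gact g r = r →
      (g.2.1 = 1 ∧ g.2.2 = 1) ∨ (g.2.1 = ψj r ∧ g.2.2 = rho0 n))
    (y z x : Profile n h → Fin n)
    (hyz : ∀ r ∈ S, StabIn1 U r →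
      y r ∈ C r ∧ z r ∈ C (gact gs r) ∧ z r ≠ gs.2.1 (y r))
    (hx : ∀ r ∈ S, ¬ StabIn1 U r → x r ∈ C r ∧ ψj r (x r) ≠ x r) :
    ∃! f : SCC n h, Resolute f ∧ Refines f C ∧ UConsistent U f ∧
      (∀ r ∈ S, StabIn1 U r → f r = {y r} ∧ f (gact gs r) = {z r}) ∧
      (∀ r ∈ S, ¬ StabIn1 U r → f r = {x r}) := by
  classical
  have hρ2 := rho0_mul_self n
  have hρinv := rho0_inv n
  have hρne := rho0_ne_one (n := n) hn
  -- every ρ-component in U is 1 or ρ₀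
  have hΩ : ∀ g ∈ U, g.2.2 = 1 ∨ g.2.2 = rho0 n := by
    intro g hg
    have hmem := hUG hg
    rw [bigG, Subgroup.mem_prod] at hmem
    have h2 := hmem.2
    rw [Subgroup.mem_prod] at h2
    obtain ⟨k, hk⟩ := Subgroup.mem_zpowers_iff.mp h2.2
    have h2z : (rho0 n) ^ (2 : ℤ) = 1 := by
      rw [show ((2:ℤ) = ((2:ℕ):ℤ)) from rfl, zpow_natCast, pow_two, hρ2]
    rcases Int.even_or_odd k with ⟨m, hm⟩ | ⟨m, hm⟩
    · left
      rw [← hk, hm, show m + m = 2 * m from by ring, zpow_mul, h2z, one_zpow]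
    · right
      rw [← hk, hm, zpow_add, zpow_mul, h2z, one_zpow, one_mul, zpow_one]
  have hcomm : ∀ g ∈ U, ∀ g' ∈ U, g.2.2 * g'.2.2 = g'.2.2 * g.2.2 := by
    intro g hg g' hg'
    rcases hΩ g hg with h1 | h1 <;> rcases hΩ g' hg' with h2 | h2 <;> rw [h1, h2] <;> simp
  have hmulU : ∀ g ∈ U, ∀ g' ∈ U, ∀ p, gact (g * g') p = gact g (gact g' p) :=
    fun g hg g' hg' p => gact_mul g g' (hcomm g hg g' hg') p
  have hinvU : ∀ g ∈ U, ∀ p, gact g⁻¹ (gact g p) = p := by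
    intro g hg p
    rw [← hmulU g⁻¹ (inv_mem hg) g hg, inv_mul_cancel, gact_one]
  -- regularity: a stabilizer element with trivial ρ has trivial ψ
  have hstab1 : ∀ q : Profile n h, ∀ g ∈ U, gact g q = q → g.2.2 = 1 → g.2.1 = 1 := by
    intro q g hg hfix hρ1
    obtain ⟨ψs, _, hprop⟩ := hreg q
    rcases hprop g hg hfix with ⟨h1, _⟩ | ⟨_, h2⟩
    · exact h1
    · rw [hρ1] at h2; exact absurd h2.symm hρne
  have hW : ∀ q : Profile n h, ∀ g ∈ U, ∀ g' ∈ U, g.2.2 = 1 → g'.2.2 = 1 →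
      gact g q = gact g' q → g.2.1 = g'.2.1 := by
    intro q g hg g' hg' h1 h1' heq
    have hmem : g'⁻¹ * g ∈ U := mul_mem (inv_mem hg') hg
    have hfix : gact (g'⁻¹ * g) q = q := by
      rw [hmulU g'⁻¹ (inv_mem hg') g hg, heq, hinvU g' hg']
    have hρ : (g'⁻¹ * g).2.2 = 1 := by
      show g'.2.2⁻¹ * g.2.2 = 1
      rw [h1, h1', mul_one, inv_one]
    have h := hstab1 q _ hmem hfix hρ
    have h' : g'.2.1⁻¹ * g.2.1 = 1 := h
    exact (inv_mul_eq_one.mp h').symm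
  -- representatives of P₂-orbits have a stabilizer element (·, ψj r, ρ₀)
  have hstabρ : ∀ r ∈ S, ¬ StabIn1 U r →
      ∃ s ∈ U, gact s r = r ∧ s.2.1 = ψj r ∧ s.2.2 = rho0 n := by
    intro r hr hns
    have hns' := hns
    rw [StabIn1] at hns'
    push_neg at hns'
    obtain ⟨s, hs, hfix, hsρ⟩ := hns'
    rcases hψj r hr hns s hs hfix with ⟨_, hc⟩ | ⟨h1, h2⟩
    · exact absurd hc hsρ
    · exact ⟨s, hs, hfix, h1, h2⟩
  set D := Dpred U S gs y z x with hD
  -- uniqueness of the value determined by D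
  have hUniq : ∀ p a b, D p a → D p b → a = b := by
    rintro p a b ⟨r, hr, g, hg, hgρ, hcase⟩ ⟨r', hr', g', hg', hgρ', hcase'⟩
    have horb : SameOrbit U r p := by
      rcases hcase with ⟨_, hfix, _⟩ | ⟨_, hfix, _⟩ | ⟨_, hfix, _⟩
      · exact ⟨g, hg, hfix⟩
      · exact ⟨g * gs, mul_mem hg hgs, by rw [hmulU g hg gs hgs]; exact hfix⟩
      · exact ⟨g, hg, hfix⟩
    have horb' : SameOrbit U r' p := by
      rcases hcase' with ⟨_, hfix, _⟩ | ⟨_, hfix, _⟩ | ⟨_, hfix, _⟩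
      · exact ⟨g', hg', hfix⟩
      · exact ⟨g' * gs, mul_mem hg' hgs, by rw [hmulU g' hg' gs hgs]; exact hfix⟩
      · exact ⟨g', hg', hfix⟩
    have hrr : r = r' := (hS p).unique ⟨hr, horb⟩ ⟨hr', horb'⟩
    subst hrr
    -- helper : a mixed (A,B) pair is impossible
    have hmix : ∀ gA ∈ U, ∀ gB ∈ U, gA.2.2 = 1 → gB.2.2 = 1 → StabIn1 U r →
        gact gA r = p → gact gB (gact gs r) = p → False := by
      intro gA hgA gB hgB hA1 hB1 hst hfA hfB
      have hBU : gB * gs ∈ U := mul_mem hgB hgs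
      have hfix : gact ((gB * gs)⁻¹ * gA) r = r := by
        rw [hmulU _ (inv_mem hBU) gA hgA, hfA, ← hmulU gB hgB gs hgs] at *
        rw [← hfB]
        exact hinvU _ hBU _
      have hρ := hst _ (mul_mem (inv_mem hBU) hgA) hfix
      have hρ' : (gB.2.2 * gs.2.2)⁻¹ * gA.2.2 = 1 := hρ
      rw [hA1, hB1, hgs3, one_mul, mul_one, hρinv] at hρ'
      exact hρne hρ'
    rcases hcase with ⟨hst, hfix, ha⟩ | ⟨hst, hfix, ha⟩ | ⟨hst, hfix, ha⟩ <;>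
      rcases hcase' with ⟨hst', hfix', hb⟩ | ⟨hst', hfix', hb⟩ | ⟨hst', hfix', hb⟩
    · rw [ha, hb, hW r g hg g' hg' hgρ hgρ' (hfix.trans hfix'.symm)]
    · exact (hmix g hg g' hg' hgρ hgρ' hst hfix hfix').elim
    · exact absurd hst hst'
    · exact (hmix g' hg' g hg hgρ' hgρ hst hfix' hfix).elim
    · rw [ha, hb, hW (gact gs r) g hg g' hg' hgρ hgρ' (hfix.trans hfix'.symm)]
    · exact absurd hst hst'
    · exact absurd hst' hst
    · exact absurd hst' hst
    · rw [ha, hb, hW r g hg g' hg' hgρ hgρ' (hfix.trans hfix'.symm)]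
  -- existence of a D-value for every profile
  have hEx : ∀ p, ∃ a, D p a := by
    intro p
    obtain ⟨r, ⟨hr, g0, hg0, hfix⟩, _⟩ := hS p
    by_cases hst : StabIn1 U r
    · rcases hΩ g0 hg0 with h1 | h1
      · exact ⟨g0.2.1 (y r), r, hr, g0, hg0, h1, Or.inl ⟨hst, hfix, rfl⟩⟩
      · refine ⟨(g0 * gs⁻¹).2.1 (z r), r, hr, g0 * gs⁻¹,
          mul_mem hg0 (inv_mem hgs), ?_, Or.inr (Or.inl ⟨hst, ?_, rfl⟩)⟩
        · show g0.2.2 * gs.2.2⁻¹ = 1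
          rw [h1, hgs3, hρinv, hρ2]
        · rw [hmulU g0 hg0 gs⁻¹ (inv_mem hgs), hinvU gs hgs, hfix]
    · obtain ⟨s, hsU, hsfix, hsψ, hsρ⟩ := hstabρ r hr hst
      rcases hΩ g0 hg0 with h1 | h1
      · exact ⟨g0.2.1 (x r), r, hr, g0, hg0, h1, Or.inr (Or.inr ⟨hst, hfix, rfl⟩)⟩
      · refine ⟨(g0 * s).2.1 (x r), r, hr, g0 * s, mul_mem hg0 hsU, ?_,
          Or.inr (Or.inr ⟨hst, ?_, rfl⟩)⟩
        · show g0.2.2 * s.2.2 = 1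
          rw [h1, hsρ, hρ2]
        · rw [hmulU g0 hg0 s hsU, hsfix, hfix]
  have hsingle : ∀ p a, D p a → {b | D p b} = {a} := by
    intro p a ha
    ext b
    simp only [Set.mem_setOf_eq, Set.mem_singleton_iff]
    exact ⟨fun hb => hUniq p b a hb ha, fun hb => hb ▸ ha⟩
  -- D shifts equivariantly under ρ = id elements
  have hShift : ∀ g ∈ U, g.2.2 = 1 → ∀ p a, D p a → D (gact g p) (g.2.1 a) := by
    rintro g hg hgρ p a ⟨r, hr, g1, hg1U, hg1ρ, hcase⟩
    refine ⟨r, hr, g * g1, mul_mem hg hg1U, ?_, ?_⟩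
    · show g.2.2 * g1.2.2 = 1
      rw [hgρ, hg1ρ, one_mul]
    · rcases hcase with ⟨hst, hfix, ha⟩ | ⟨hst, hfix, ha⟩ | ⟨hst, hfix, ha⟩
      · exact Or.inl ⟨hst, by rw [hmulU g hg g1 hg1U, hfix], by rw [ha]; rfl⟩
      · exact Or.inr (Or.inl ⟨hst, by rw [hmulU g hg g1 hg1U, hfix], by rw [ha]; rfl⟩)
      · exact Or.inr (Or.inr ⟨hst, by rw [hmulU g hg g1 hg1U, hfix], by rw [ha]; rfl⟩)
  -- D flips under ρ = ρ₀ elements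
  have hFlip : ∀ g ∈ U, g.2.2 = rho0 n → ∀ p a, D p a →
      ∃ b, D (gact g p) b ∧ b ≠ g.2.1 a := by
    rintro g hg hgρ p a ⟨r, hr, g1, hg1U, hg1ρ, hcase⟩
    rcases hcase with ⟨hst, hfix, ha⟩ | ⟨hst, hfix, ha⟩ | ⟨hst, hfix, ha⟩
    · -- case A : flip to case B with g * g1 * gs⁻¹
      refine ⟨(g * g1 * gs⁻¹).2.1 (z r), ⟨r, hr, g * g1 * gs⁻¹,
        mul_mem (mul_mem hg hg1U) (inv_mem hgs), ?_, Or.inr (Or.inl ⟨hst, ?_, rfl⟩)⟩, ?_⟩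
      · show g.2.2 * g1.2.2 * gs.2.2⁻¹ = 1
        rw [hgρ, hg1ρ, hgs3, mul_one, hρinv, hρ2]
      · rw [hmulU _ (mul_mem hg hg1U) gs⁻¹ (inv_mem hgs), hinvU gs hgs,
          hmulU g hg g1 hg1U, hfix]
      · intro heq
        apply (hyz r hr hst).2.2
        rw [ha] at heq
        have heq' : g.2.1 (g1.2.1 (gs.2.1⁻¹ (z r))) = g.2.1 (g1.2.1 (y r)) := heq
        have h2 : gs.2.1⁻¹ (z r) = y r := by
          have := (Equiv.injective _) ((Equiv.injective _) heq')
          exact this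
        rw [← h2]
        simp
    · -- case B : flip to case A with g * g1 * gs
      refine ⟨(g * g1 * gs).2.1 (y r), ⟨r, hr, g * g1 * gs,
        mul_mem (mul_mem hg hg1U) hgs, ?_, Or.inl ⟨hst, ?_, rfl⟩⟩, ?_⟩
      · show g.2.2 * g1.2.2 * gs.2.2 = 1
        rw [hgρ, hg1ρ, hgs3, mul_one, hρ2]
      · rw [hmulU _ (mul_mem hg hg1U) gs hgs, hmulU g hg g1 hg1U, hfix]
      · intro heq
        apply (hyz r hr hst).2.2
        rw [ha] at heq
        have heq' : g.2.1 (g1.2.1 (gs.2.1 (y r))) = g.2.1 (g1.2.1 (z r)) := heq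
        exact ((Equiv.injective _) ((Equiv.injective _) heq')).symm
    · -- case C : flip via the stabilizer element
      obtain ⟨s, hsU, hsfix, hsψ, hsρ⟩ := hstabρ r hr hst
      refine ⟨(g * g1 * s).2.1 (x r), ⟨r, hr, g * g1 * s,
        mul_mem (mul_mem hg hg1U) hsU, ?_, Or.inr (Or.inr ⟨hst, ?_, rfl⟩)⟩, ?_⟩
      · show g.2.2 * g1.2.2 * s.2.2 = 1
        rw [hgρ, hg1ρ, hsρ, mul_one, hρ2]
      · rw [hmulU _ (mul_mem hg hg1U) s hsU, hsfix, hmulU g hg g1 hg1U, hfix]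
      · intro heq
        apply (hx r hr hst).2
        rw [ha] at heq
        have heq' : g.2.1 (g1.2.1 (s.2.1 (x r))) = g.2.1 (g1.2.1 (x r)) := heq
        have := (Equiv.injective _) ((Equiv.injective _) heq')
        rw [hsψ] at this
        exact this
  -- the resolute refinement
  refine ⟨fun p => {a | D p a}, ⟨?_, ?_, ?_, ?_, ?_⟩, ?_⟩
  · -- Resolute
    intro p
    obtain ⟨a, ha⟩ := hEx p
    exact ⟨a, hsingle p a ha⟩
  · -- Refines
    intro p a ha
    obtain ⟨r, hr, g1, hgU, hgρ1, hcase⟩ := ha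
    rcases hcase with ⟨hst, hfix, haa⟩ | ⟨hst, hfix, haa⟩ | ⟨hst, hfix, haa⟩
    · rw [← hfix, (hcons r g1 hgU).1 hgρ1, haa]
      exact Set.mem_image_of_mem _ (hyz r hr hst).1
    · rw [← hfix, (hcons (gact gs r) g1 hgU).1 hgρ1, haa]
      exact Set.mem_image_of_mem _ (hyz r hr hst).2.1
    · rw [← hfix, (hcons r g1 hgU).1 hgρ1, haa]
      exact Set.mem_image_of_mem _ (hx r hr hst).1
  · -- UConsistent
    intro p g hg
    constructor
    · intro hρ1
      obtain ⟨a, ha⟩ := hEx p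
      show {b | D (gact g p) b} = g.2.1 '' {b | D p b}
      rw [hsingle p a ha, hsingle _ _ (hShift g hg hρ1 p a ha), Set.image_singleton]
    · intro hρρ x0 hx0
      have hD0 : D p x0 := by
        have hm : x0 ∈ ({x0} : Set (Fin n)) := rfl
        rw [show ({x0} : Set (Fin n)) = {b | D p b} from hx0.symm] at hm
        exact hm
      obtain ⟨b, hb, hbne⟩ := hFlip g hg hρρ p x0 hD0
      intro hcontra
      apply hbne
      have hcontra' : {b | D (gact g p) b} = g.2.1 '' {b | D p b} := hcontra
      have hx0' : {b | D p b} = {x0} := hx0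
      have : {b | D (gact g p) b} = {g.2.1 x0} := by
        rw [hcontra', hx0', Set.image_singleton]
      have hb' : b ∈ ({g.2.1 x0} : Set (Fin n)) := this ▸ hb
      exact hb'
  · -- boundary conditions on P₁ representatives
    intro r hr hst
    constructor
    · show {b | D r b} = {y r}
      exact hsingle r (y r) ⟨r, hr, 1, one_mem U, rfl, Or.inl ⟨hst, gact_one r, rfl⟩⟩
    · show {b | D (gact gs r) b} = {z r}
      exact hsingle _ (z r) ⟨r, hr, 1, one_mem U, rfl,
        Or.inr (Or.inl ⟨hst, gact_one _, rfl⟩)⟩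
  · -- boundary conditions on P₂ representatives
    intro r hr hst
    show {b | D r b} = {x r}
    exact hsingle r (x r) ⟨r, hr, 1, one_mem U, rfl, Or.inr (Or.inr ⟨hst, gact_one r, rfl⟩)⟩
  · -- uniqueness
    rintro f' ⟨_, _, hcons', hb1', hb2'⟩
    funext p
    obtain ⟨a, ha⟩ := hEx p
    show f' p = {b | D p b}
    rw [hsingle p a ha]
    obtain ⟨r, hr, g1, hgU, hgρ1, hcase⟩ := ha
    rcases hcase with ⟨hst, hfix, haa⟩ | ⟨hst, hfix, haa⟩ | ⟨hst, hfix, haa⟩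
    · rw [← hfix, (hcons' r g1 hgU).1 hgρ1, (hb1' r hr hst).1, Set.image_singleton, haa]
    · rw [← hfix, (hcons' (gact gs r) g1 hgU).1 hgρ1, (hb1' r hr hst).2,
        Set.image_singleton, haa]
    · rw [← hfix, (hcons' r g1 hgU).1 hgρ1, hb2' r hr hst, Set.image_singleton, haa]
end

section
/- The Pareto social choice correspondence Par is immune to the reversal bias: for every preference profile p with |Par(p)| = 1, Par(p^{(id,id,ρ_0)}) ≠ Par(p). -/
/-- The Pareto social choice correspondence: `x` is selected iff no alternative
unanimously beats it, i.e. for every other `y` some individual prefers `x` to `y`. -/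
def Par {n h : ℕ} : SCC n h :=
  fun p => {x | ∀ y, y ≠ x → ∃ i, prefGT (p i) x y}

/-- the Pareto scc is immune to the reversal bias. -/
theorem statement14 {n h : ℕ} (hh : 2 ≤ h) (hn : 2 ≤ n) :
    Immune (Par (n := n) (h := h)) := by
  intro p x hx hrev
  rw [hx] at hrev
  obtain ⟨m, rfl⟩ : ∃ m, n = m + 1 := ⟨n - 1, by omega⟩
  set i0 : Fin h := ⟨0, by omega⟩ with hi0
  have ht : p i0 0 ∈ Par p := by
    intro y hy
    refine ⟨i0, ?_⟩
    unfold prefGT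
    rw [Equiv.symm_apply_apply]
    have hne : (p i0).symm y ≠ 0 := fun hc => hy (by
      rw [← Equiv.apply_symm_apply (p i0) y, hc])
    exact Fin.pos_of_ne_zero hne
  have hb : p i0 (Fin.last m) ∈ Par (revProfile p) := by
    intro y hy
    refine ⟨i0, ?_⟩
    unfold prefGT revProfile rho0
    have key : ∀ z : Fin (m+1), (p i0 * Fin.revPerm).symm z = Fin.rev ((p i0).symm z) := by
      intro z; rfl
    rw [key, key, Equiv.symm_apply_apply]
    have hne : (p i0).symm y ≠ Fin.last m := fun hc => hy (by
      rw [← Equiv.apply_symm_apply (p i0) y, hc])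
    have h1 : Fin.rev (Fin.last m) = 0 := by simp
    rw [h1]
    have : Fin.rev ((p i0).symm y) ≠ 0 := by
      intro hc
      apply hne
      have := Fin.rev_injective (a₁ := (p i0).symm y) (a₂ := Fin.last m)
      exact this (by rw [hc, h1])
    exact Fin.pos_of_ne_zero this
  rw [hx] at ht
  rw [hrev] at hb
  have : p i0 0 = p i0 (Fin.last m) := by
    rw [Set.mem_singleton_iff] at ht hb
    rw [ht, hb]
  have h0 : (0 : Fin (m+1)) = Fin.last m := (p i0).injective this
  have : m = 0 := by
    have := congrArg Fin.val h0
    simpa [Fin.last] using this.symm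
  omega
end

section
/- The Kemeny social choice correspondence Kem is immune to the reversal bias: for every preference profile p with |Kem(p)| = 1, Kem(p^{(id,id,ρ_0)}) ≠ Kem(p). -/
/-- `w_p(x,y)`: the number of individuals strictly preferring `x` to `y`. -/
def wt {n h : ℕ} (p : Profile n h) (x y : Fin n) : ℕ :=
  (Finset.univ.filter fun i => prefGT (p i) x y).card

/-- The Kemeny score `k_p(q) = Σ_{x ≻_q y} w_p(x,y)`. -/
def kemScore {n h : ℕ} (p : Profile n h) (q : Pref n) : ℕ :=
  ∑ z : Fin n × Fin n, if prefGT q z.1 z.2 then wt p z.1 z.2 else 0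

/-- `K(p)`: the set of maximizers of `k_p` over `L(N)`. -/
def KemMaxSet {n h : ℕ} (p : Profile n h) : Set (Pref n) :=
  {q | ∀ q', kemScore p q' ≤ kemScore p q}

/-- The Kemeny social choice correspondence: `x` is selected iff it is top-ranked by
some maximizer of `k_p`. -/
def Kem {n h : ℕ} : SCC n h :=
  fun p => {x | ∃ q ∈ KemMaxSet p, (q.symm x : ℕ) = 0}


lemma prefGT_mul_rho0 {n : ℕ} (q : Pref n) (x y : Fin n) :
    prefGT (q * rho0 n) x y ↔ prefGT q y x := by
  show (q.symm x).rev < (q.symm y).rev ↔ _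
  exact Fin.rev_lt_rev

lemma wt_revProfile {n h : ℕ} (p : Profile n h) (x y : Fin n) :
    wt (revProfile p) x y = wt p y x := by
  unfold wt revProfile
  congr 1; ext i
  simp [prefGT_mul_rho0]

lemma kemScore_revProfile {n h : ℕ} (p : Profile n h) (q : Pref n) :
    kemScore (revProfile p) (q * rho0 n) = kemScore p q := by
  unfold kemScore
  rw [← Equiv.sum_comp (Equiv.prodComm (Fin n) (Fin n))]
  apply Fintype.sum_congr
  intro z
  simp [prefGT_mul_rho0, wt_revProfile]

lemma rho0_sq {n : ℕ} (q : Pref n) : q * rho0 n * rho0 n = q := by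
  ext x
  simp [Equiv.Perm.mul_apply, rho0, Fin.rev_rev]

theorem statement15_aux {n h : ℕ} (hn : 2 ≤ n) : Immune (Kem (n := n) (h := h)) := by
  intro p x hx heq
  rw [hx] at heq
  have hxKem : x ∈ Kem p := by rw [hx]; rfl
  obtain ⟨q, hq, hq0⟩ := hxKem
  have hn1 : n - 1 < n := by omega
  set b : Fin n := ⟨n - 1, hn1⟩ with hb
  set y : Fin n := q b with hy
  have hyKem : y ∈ Kem (revProfile p) := by
    refine ⟨q * rho0 n, ?_, ?_⟩
    · intro r
      have h1 : kemScore (revProfile p) r = kemScore p (r * rho0 n) := by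
        rw [← kemScore_revProfile p (r * rho0 n), rho0_sq]
      rw [h1, kemScore_revProfile]
      exact hq _
    · show ((q.symm y).rev : ℕ) = 0
      have h2 : q.symm y = b := by rw [hy]; simp
      rw [h2]
      simp [hb, Fin.rev]
      omega
  rw [heq] at hyKem
  have hyx : y = x := hyKem
  have h3 : (q.symm y : ℕ) = n - 1 := by rw [hy]; simp [hb]
  rw [hyx, hq0] at h3
  omega

/-- the Kemeny scc is immune to the reversal bias. -/
theorem statement15 {n h : ℕ} (hh : 2 ≤ h) (hn : 2 ≤ n) :
    Immune (Kem (n := n) (h := h)) := by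
  exact statement15_aux hn
end

section
/- Each of the Borda, Copeland, Minimax and Kemeny social choice correspondences is resolute if and only if n = 2 and h is odd. -/
/-- The Borda score of `x`: `Σ_i (n - rank_{p_i}(x))` (with the 0-indexed rank
`(p i).symm x`, so each summand is `n - 1 - rank₀`). -/
def bordaScore {n h : ℕ} (p : Profile n h) (x : Fin n) : ℕ :=
  ∑ i, (n - 1 - ((p i).symm x : ℕ))

/-- The Borda social choice correspondence. -/
def Bor {n h : ℕ} : SCC n h := fun p => {x | ∀ y, bordaScore p y ≤ bordaScore p x}

/-- The Copeland score of `x` (the threshold `(h+2)/2` is `⌈(h+1)/2⌉`). -/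
def copScore {n h : ℕ} (p : Profile n h) (x : Fin n) : ℤ :=
  ((Finset.univ.filter fun y => (h + 2) / 2 ≤ wt p x y).card : ℤ) -
    ((Finset.univ.filter fun y => (h + 2) / 2 ≤ wt p y x).card : ℤ)

/-- The Copeland social choice correspondence. -/
def Cop {n h : ℕ} : SCC n h := fun p => {x | ∀ y, copScore p y ≤ copScore p x}

/-- The Minimax score of `x`: `min_{y ≠ x} w_p(x,y)`. -/
noncomputable def minScore {n h : ℕ} (p : Profile n h) (x : Fin n) : ℕ :=
  sInf {m | ∃ y, y ≠ x ∧ wt p x y = m}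

/-- The Minimax social choice correspondence. -/
def MinC {n h : ℕ} : SCC n h := fun p => {x | ∀ y, minScore p y ≤ minScore p x}

-- ============ general lemmas ============
section general
variable {n h : ℕ}

lemma prefGT_one_iff {x y : Fin n} : prefGT 1 x y ↔ x < y := Iff.rfl

lemma prefGT_rho0_iff {x y : Fin n} : prefGT (rho0 n) x y ↔ y < x := Fin.rev_lt_rev

lemma not_prefGT_self (q : Pref n) (x : Fin n) : ¬ prefGT q x x := lt_irrefl _

lemma not_prefGT_iff {q : Pref n} {x y : Fin n} (hxy : x ≠ y) :
    (¬ prefGT q x y) ↔ prefGT q y x := by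
  have : q.symm x ≠ q.symm y := fun e => hxy (q.symm.injective e)
  unfold prefGT
  omega

lemma wt_self (p : Profile n h) (x : Fin n) : wt p x x = 0 := by
  simp [wt, not_prefGT_self]

lemma wt_add (p : Profile n h) {x y : Fin n} (hxy : x ≠ y) : wt p x y + wt p y x = h := by
  have : (Finset.univ.filter fun i => prefGT (p i) y x)
      = Finset.univ.filter fun i => ¬ prefGT (p i) x y := by
    apply Finset.filter_congr
    intro i _
    simp [not_prefGT_iff hxy]
  rw [wt, wt, this, Finset.card_filter_add_card_filter_not, Finset.card_univ,
    Fintype.card_fin]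

lemma not_resolute_of_two {C : SCC n h} {x y : Fin n} (hxy : x ≠ y) (p : Profile n h)
    (hx : x ∈ C p) (hy : y ∈ C p) : ¬ Resolute C := by
  intro hr
  obtain ⟨z, hz⟩ := hr p
  rw [hz, Set.mem_singleton_iff] at hx hy
  exact hxy (hx.trans hy.symm)

end general

-- ============ Part A : n = 2, h odd ============
section n2
variable {h : ℕ}

lemma fin2_other {a b x : Fin 2} (hab : a ≠ b) (hxa : x ≠ a) : x = b := by
  have h1 : a.val ≠ b.val := fun e => hab (Fin.ext e)
  have h2 : x.val ≠ a.val := fun e => hxa (Fin.ext e)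
  apply Fin.ext
  omega

lemma borda2 (p : Profile 2 h) {a b : Fin 2} (hab : a ≠ b) : bordaScore p a = wt p a b := by
  rw [bordaScore, wt, Finset.card_filter]
  apply Finset.sum_congr rfl
  intro i _
  have hne : ((p i).symm a).val ≠ ((p i).symm b).val :=
    fun e => hab ((p i).symm.injective (Fin.ext e))
  have h1 : ((p i).symm a).val < 2 := ((p i).symm a).isLt
  have h2 : ((p i).symm b).val < 2 := ((p i).symm b).isLt
  by_cases hp : prefGT (p i) a b
  · rw [if_pos hp]
    have := hp
    unfold prefGT at this
    rw [Fin.lt_def] at this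
    omega
  · rw [if_neg hp]
    unfold prefGT at hp
    rw [Fin.lt_def] at hp
    omega

lemma kem2 (p : Profile 2 h) (q : Pref 2) : kemScore p q = wt p (q 0) (q 1) := by
  have h4 : kemScore p q =
      ((if prefGT q 0 1 then wt p 0 1 else 0) + (if prefGT q 1 0 then wt p 1 0 else 0)) := by
    rw [kemScore, Fintype.sum_prod_type]
    rw [Fin.sum_univ_two]
    rw [Fin.sum_univ_two, Fin.sum_univ_two]
    simp [not_prefGT_self]
  have h01 : (0 : Fin 2) ≠ 1 := by decide
  rcases eq_or_ne (q 0) 0 with h0 | h0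
  · have h1 : q 1 = 1 := fin2_other h01 (fun e => h01 (q.injective (h0.trans e.symm)))
    have s0 : q.symm 0 = 0 := (Equiv.symm_apply_eq q).mpr h0.symm
    have s1 : q.symm 1 = 1 := (Equiv.symm_apply_eq q).mpr h1.symm
    rw [h4, h0, h1]
    have hgt : prefGT q 0 1 := by unfold prefGT; rw [s0, s1]; decide
    rw [if_pos hgt, if_neg ((not_prefGT_iff h01.symm).mpr hgt), add_zero]
  · have h0' : q 0 = 1 := fin2_other h01 h0
    have h1 : q 1 = 0 := fin2_other h01.symm (fun e => h01 (q.injective (h0'.trans e.symm)))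
    have s0 : q.symm 1 = 0 := (Equiv.symm_apply_eq q).mpr h0'.symm
    have s1 : q.symm 0 = 1 := (Equiv.symm_apply_eq q).mpr h1.symm
    rw [h4, h0', h1]
    have hgt : prefGT q 1 0 := by unfold prefGT; rw [s0, s1]; decide
    rw [if_pos hgt, if_neg ((not_prefGT_iff h01).mpr hgt), zero_add]

lemma bor2_eq (p : Profile 2 h) {a b : Fin 2} (hab : a ≠ b) (hw : wt p b a < wt p a b) :
    Bor p = {a} := by
  rw [Set.eq_singleton_iff_unique_mem]
  constructor
  · intro y
    rcases eq_or_ne y a with rfl | hy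
    · exact le_refl _
    · rw [fin2_other hab hy, borda2 p hab, borda2 p hab.symm]
      exact le_of_lt hw
  · intro x hx
    by_contra hxa
    rw [fin2_other hab hxa] at hx
    have := hx a
    rw [borda2 p hab, borda2 p hab.symm] at this
    omega

lemma cop2_eq (p : Profile 2 h) {a b : Fin 2} (hab : a ≠ b) (hw : wt p b a < wt p a b)
    (hodd : Odd h) : Cop p = {a} := by
  obtain ⟨k, hk⟩ := hodd
  have hsum := wt_add p hab
  have hthr : (h + 2) / 2 = k + 1 := by omega
  have key : ∀ x y : Fin 2, ((h+2)/2 ≤ wt p x y) ↔ (x = a ∧ y = b) := by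
    intro x y
    rw [hthr]
    constructor
    · intro hle
      rcases eq_or_ne x a with rfl | hx
      · rcases eq_or_ne y b with rfl | hy
        · exact ⟨rfl, rfl⟩
        · rw [fin2_other hab.symm hy, wt_self] at hle; omega
      · rw [fin2_other hab hx] at hle
        rcases eq_or_ne y a with rfl | hy
        · omega
        · rw [fin2_other hab hy, wt_self] at hle; omega
    · rintro ⟨rfl, rfl⟩; omega
  have hca : copScore p a = 1 := by
    rw [copScore]
    have e1 : (Finset.univ.filter fun y => (h+2)/2 ≤ wt p a y) = {b} := by
      ext y
      simp only [Finset.mem_filter, Finset.mem_univ, true_and, Finset.mem_singleton, key]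
      all_goals tauto
    have e2 : (Finset.univ.filter fun y => (h+2)/2 ≤ wt p y a) = ∅ := by
      ext y
      simp only [Finset.mem_filter, Finset.mem_univ, true_and, Finset.notMem_empty,
        iff_false, key]
      rintro ⟨rfl, h'⟩; exact hab h'
    rw [e1, e2]; simp
  have hcb : copScore p b = -1 := by
    rw [copScore]
    have e1 : (Finset.univ.filter fun y => (h+2)/2 ≤ wt p b y) = ∅ := by
      ext y
      simp only [Finset.mem_filter, Finset.mem_univ, true_and, Finset.notMem_empty,
        iff_false, key]
      rintro ⟨h', rfl⟩; exact hab h'.symm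
    have e2 : (Finset.univ.filter fun y => (h+2)/2 ≤ wt p y b) = {a} := by
      ext y
      simp only [Finset.mem_filter, Finset.mem_univ, true_and, Finset.mem_singleton, key]
      all_goals tauto
    rw [e1, e2]; simp
  rw [Set.eq_singleton_iff_unique_mem]
  constructor
  · intro y
    rcases eq_or_ne y a with rfl | hy
    · exact le_refl _
    · rw [fin2_other hab hy, hca, hcb]; omega
  · intro x hx
    by_contra hxa
    rw [fin2_other hab hxa] at hx
    have := hx a
    rw [hca, hcb] at this
    omega

lemma minSet2 (p : Profile 2 h) {x y : Fin 2} (hxy : x ≠ y) :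
    {m | ∃ z, z ≠ x ∧ wt p x z = m} = {wt p x y} := by
  ext m
  constructor
  · rintro ⟨z, hz, rfl⟩
    rw [fin2_other hxy hz]
    rfl
  · rintro rfl
    exact ⟨y, hxy.symm, rfl⟩

lemma min2_eq (p : Profile 2 h) {a b : Fin 2} (hab : a ≠ b) (hw : wt p b a < wt p a b) :
    MinC p = {a} := by
  have ha : minScore p a = wt p a b := by
    rw [minScore, minSet2 p hab, csInf_singleton]
  have hb : minScore p b = wt p b a := by
    rw [minScore, minSet2 p hab.symm, csInf_singleton]
  rw [Set.eq_singleton_iff_unique_mem]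
  constructor
  · intro y
    rcases eq_or_ne y a with rfl | hy
    · exact le_refl _
    · rw [fin2_other hab hy, ha, hb]; omega
  · intro x hx
    by_contra hxa
    rw [fin2_other hab hxa] at hx
    have := hx a
    rw [ha, hb] at this
    omega

lemma kem2_eq (p : Profile 2 h) {a b : Fin 2} (hab : a ≠ b) (hw : wt p b a < wt p a b) :
    Kem p = {a} := by
  have h01 : (0 : Fin 2) ≠ 1 := by decide
  set qa : Pref 2 := Equiv.swap 0 a with hqadef
  have hqa0 : qa 0 = a := Equiv.swap_apply_left 0 a
  have hqa1 : qa 1 = b := by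
    rcases eq_or_ne a 0 with rfl | hane
    · have hb1 : b = 1 := fin2_other h01 (Ne.symm hab)
      rw [hb1, hqadef, Equiv.swap_self]
      rfl
    · have ha1 : a = 1 := fin2_other h01 hane
      have hb0 : b = 0 := fin2_other h01.symm (fun e => hab (ha1.trans e.symm))
      rw [hb0, hqadef, ha1]
      exact Equiv.swap_apply_right 0 1
  have hscore : ∀ q : Pref 2, kemScore p q ≤ wt p a b := by
    intro q
    rw [kem2]
    rcases eq_or_ne (q 0) a with h0 | h0
    · have h1 : q 1 = b := fin2_other hab (fun e => (h01 (q.injective (h0.trans e.symm))).elim)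
      rw [h0, h1]
    · have h0' : q 0 = b := fin2_other hab h0
      have h1 : q 1 = a :=
        fin2_other hab.symm (fun e => (h01 (q.injective (h0'.trans e.symm))).elim)
      rw [h0', h1]
      omega
  have hqamax : qa ∈ KemMaxSet p := by
    intro q'
    rw [kem2 p qa, hqa0, hqa1]
    exact hscore q'
  rw [Set.eq_singleton_iff_unique_mem]
  constructor
  · refine ⟨qa, hqamax, ?_⟩
    have : qa.symm a = 0 := by rw [← hqa0, Equiv.symm_apply_apply]
    rw [this]
    rfl
  · rintro x ⟨q, hq, hx⟩
    have hx0 : q.symm x = 0 := Fin.ext hx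
    have hxq : x = q 0 := by rw [← hx0, Equiv.apply_symm_apply]
    by_contra hxa
    have hxb : x = b := fin2_other hab hxa
    have h0' : q 0 = b := by rw [← hxq, hxb]
    have h1 : q 1 = a :=
      fin2_other hab.symm (fun e => (h01 (q.injective (h0'.trans e.symm))).elim)
    have := hq qa
    rw [kem2 p qa, hqa0, hqa1, kem2 p q, h0', h1] at this
    omega

end n2

-- ============ Part B1 : h even ============
section heven
variable {n : ℕ}

lemma sum_even_odd (A B : ℕ) : ∀ d, ∑ i ∈ Finset.range (2*d), (if Even i then A else B)
    = d * (A + B) := by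
  intro d
  induction d with
  | zero => simp
  | succ d ih =>
    have e : 2*(d+1) = (2*d) + 1 + 1 := by ring
    rw [e, Finset.sum_range_succ, Finset.sum_range_succ, ih]
    have h1 : Even (2*d) := even_two_mul d
    have h2 : ¬ Even (2*d + 1) := by simp [Nat.even_add_one, h1]
    rw [if_pos h1, if_neg h2]
    ring

/-- the "paired" profile: even-indexed voters have the identity order, odd-indexed ones
the reversed order -/
def pe (n h : ℕ) : Profile n h := fun i => if Even i.val then 1 else rho0 n

lemma sum_pe {h d : ℕ} (hd : h = 2 * d) (f : Pref n → ℕ) :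
    ∑ i : Fin h, f (pe n h i) = d * (f 1 + f (rho0 n)) := by
  subst hd
  have : ∀ i : Fin (2*d), f (pe n (2*d) i) = if Even (i:ℕ) then f 1 else f (rho0 n) := by
    intro i
    by_cases hi : Even (i : ℕ) <;> simp [pe, hi]
  rw [Finset.sum_congr rfl (fun i _ => this i)]
  rw [Fin.sum_univ_eq_sum_range (fun i => if Even i then f 1 else f (rho0 n)) (2*d)]
  exact sum_even_odd _ _ d

lemma wt_pe {h d : ℕ} (hd : h = 2 * d) {x y : Fin n} (hxy : x ≠ y) :
    wt (pe n h) x y = d := by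
  rw [wt, Finset.card_filter]
  refine (sum_pe hd (fun q => if prefGT q x y then (1:ℕ) else 0)).trans ?_
  rcases lt_or_gt_of_ne hxy with hlt | hlt
  · rw [if_pos (prefGT_one_iff.mpr hlt),
      if_neg (fun hcon => absurd (prefGT_rho0_iff.mp hcon) (asymm hlt))]
    omega
  · rw [if_neg (fun hcon => absurd (prefGT_one_iff.mp hcon) (asymm hlt)),
      if_pos (prefGT_rho0_iff.mpr hlt)]
    omega

lemma borda_pe {h d : ℕ} (hd : h = 2 * d) (x : Fin n) :
    bordaScore (pe n h) x = d * (n - 1) := by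
  rw [bordaScore]
  refine (sum_pe hd (fun q => n - 1 - ((q.symm x : ℕ)))).trans ?_
  have h1 : (((1 : Pref n).symm x : ℕ)) = (x : ℕ) := rfl
  have h2 : (((rho0 n).symm x : ℕ)) = n - ((x : ℕ) + 1) := Fin.val_rev x
  rw [h1, h2]
  have := x.isLt
  have e : (n - 1 - (x:ℕ)) + (n - 1 - (n - ((x:ℕ) + 1))) = n - 1 := by omega
  rw [e]

lemma exists_ne_fin (hn : 2 ≤ n) (x : Fin n) : ∃ y : Fin n, y ≠ x := by
  rcases eq_or_ne x ⟨0, by omega⟩ with rfl | hx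
  · exact ⟨⟨1, by omega⟩, by simp [Fin.ext_iff]⟩
  · exact ⟨⟨0, by omega⟩, fun e => hx e.symm⟩

lemma min_pe {h d : ℕ} (hn : 2 ≤ n) (hd : h = 2 * d) (x : Fin n) :
    minScore (pe n h) x = d := by
  obtain ⟨y, hy⟩ := exists_ne_fin hn x
  have hset : {m | ∃ z, z ≠ x ∧ wt (pe n h) x z = m} = {d} := by
    ext m
    constructor
    · rintro ⟨z, hz, rfl⟩
      exact wt_pe hd (fun e => hz (e.symm ▸ rfl))
    · rintro rfl
      exact ⟨y, hy, wt_pe hd (fun e => hy (e.symm ▸ rfl))⟩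
  rw [minScore, hset, csInf_singleton]

lemma cop_pe {h d : ℕ} (hd : h = 2 * d) (x : Fin n) : copScore (pe n h) x = 0 := by
  have key : ∀ u v : Fin n, ¬ ((h + 2) / 2 ≤ wt (pe n h) u v) := by
    intro u v
    rcases eq_or_ne u v with rfl | huv
    · rw [wt_self]; omega
    · rw [wt_pe hd huv]; omega
  rw [copScore]
  have e1 : (Finset.univ.filter fun y => (h+2)/2 ≤ wt (pe n h) x y) = ∅ :=
    Finset.filter_eq_empty_iff.mpr (fun {y} _ => key x y)
  have e2 : (Finset.univ.filter fun y => (h+2)/2 ≤ wt (pe n h) y x) = ∅ :=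
    Finset.filter_eq_empty_iff.mpr (fun {y} _ => key y x)
  rw [e1, e2]
  simp

lemma kem_pe {h d : ℕ} (hd : h = 2 * d) (q : Pref n) :
    kemScore (pe n h) q = ∑ z : Fin n × Fin n, (if (z.1 : Fin n) < z.2 then d else 0) := by
  have step1 : kemScore (pe n h) q
      = ∑ z : Fin n × Fin n, (if prefGT q z.1 z.2 then d else 0) := by
    rw [kemScore]
    apply Finset.sum_congr rfl
    intro z _
    by_cases hz : prefGT q z.1 z.2
    · rw [if_pos hz, if_pos hz,
        wt_pe hd (fun e => not_prefGT_self q z.2 (by rw [e] at hz; exact hz))]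
    · rw [if_neg hz, if_neg hz]
  rw [step1]
  exact Fintype.sum_equiv (Equiv.prodCongr q.symm q.symm)
    (fun z => if prefGT q z.1 z.2 then d else 0)
    (fun z => if (z.1 : Fin n) < z.2 then d else 0)
    (fun z => rfl)

lemma kemmax_pe {h d : ℕ} (hd : h = 2 * d) (q : Pref n) : q ∈ KemMaxSet (pe n h) := by
  intro q'
  rw [kem_pe hd q', kem_pe hd q]

lemma kem_pe_mem {h d : ℕ} (hd : h = 2 * d) (x : Fin n) : x ∈ Kem (pe n h) := by
  refine ⟨Equiv.swap ⟨0, x.pos⟩ x, kemmax_pe hd _, ?_⟩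
  rw [Equiv.symm_swap, Equiv.swap_apply_right]

end heven


-- ============ Part B2 : n ≥ 3, h odd ============
section n3
variable {n : ℕ}

def A0 (hn : 3 ≤ n) : Fin n := ⟨0, by omega⟩
def A1 (hn : 3 ≤ n) : Fin n := ⟨1, by omega⟩
def A2 (hn : 3 ≤ n) : Fin n := ⟨2, by omega⟩

/-- the 3-cycle (0 1 2) -/
def sig (hn : 3 ≤ n) : Pref n := Equiv.swap (A0 hn) (A1 hn) * Equiv.swap (A1 hn) (A2 hn)

variable (hn : 3 ≤ n)

lemma A_ne01 : A0 hn ≠ A1 hn := by simp [A0, A1, Fin.ext_iff]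
lemma A_ne02 : A0 hn ≠ A2 hn := by simp [A0, A2, Fin.ext_iff]
lemma A_ne12 : A1 hn ≠ A2 hn := by simp [A1, A2, Fin.ext_iff]

lemma sig_A0 : sig hn (A0 hn) = A1 hn := by
  rw [sig, Equiv.Perm.mul_apply, Equiv.swap_apply_of_ne_of_ne (A_ne01 hn) (A_ne02 hn),
    Equiv.swap_apply_left]
lemma sig_A1 : sig hn (A1 hn) = A2 hn := by
  rw [sig, Equiv.Perm.mul_apply, Equiv.swap_apply_left,
    Equiv.swap_apply_of_ne_of_ne (Ne.symm (A_ne02 hn)) (Ne.symm (A_ne12 hn))]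
lemma sig_A2 : sig hn (A2 hn) = A0 hn := by
  rw [sig, Equiv.Perm.mul_apply, Equiv.swap_apply_right, Equiv.swap_apply_right]
lemma sig_fix {z : Fin n} (hz : 3 ≤ (z : ℕ)) : sig hn z = z := by
  have h1 : z ≠ A1 hn := by simp [A1, Fin.ext_iff]; omega
  have h2 : z ≠ A2 hn := by simp [A2, Fin.ext_iff]; omega
  have h0 : z ≠ A0 hn := by simp [A0, Fin.ext_iff]; omega
  rw [sig, Equiv.Perm.mul_apply, Equiv.swap_apply_of_ne_of_ne h1 h2,
    Equiv.swap_apply_of_ne_of_ne h0 h1]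

lemma sigs_A0 : (sig hn).symm (A0 hn) = A2 hn := (Equiv.symm_apply_eq _).mpr (sig_A2 hn).symm
lemma sigs_A1 : (sig hn).symm (A1 hn) = A0 hn := (Equiv.symm_apply_eq _).mpr (sig_A0 hn).symm
lemma sigs_A2 : (sig hn).symm (A2 hn) = A1 hn := (Equiv.symm_apply_eq _).mpr (sig_A1 hn).symm
lemma sigs_fix {z : Fin n} (hz : 3 ≤ (z : ℕ)) : (sig hn).symm z = z :=
  (Equiv.symm_apply_eq _).mpr (sig_fix hn hz).symm

lemma fin_cases3 (z : Fin n) : z = A0 hn ∨ z = A1 hn ∨ z = A2 hn ∨ 3 ≤ (z : ℕ) := by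
  rcases Nat.lt_or_ge (z : ℕ) 3 with hz | hz
  · have : (z:ℕ) = 0 ∨ (z:ℕ) = 1 ∨ (z:ℕ) = 2 := by omega
    rcases this with e | e | e
    · exact Or.inl (Fin.ext e)
    · exact Or.inr (Or.inl (Fin.ext e))
    · exact Or.inr (Or.inr (Or.inl (Fin.ext e)))
  · exact Or.inr (Or.inr (Or.inr hz))

/-- the three-cycle part of the sig-sig-symm composition: `σ⁻¹ ∘ σ⁻¹ = σ` -/
lemma sig_symm_symm (z : Fin n) : (sig hn).symm ((sig hn).symm z) = sig hn z := by
  rcases fin_cases3 hn z with rfl | rfl | rfl | hz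
  · rw [sigs_A0, sigs_A2, sig_A0]
  · rw [sigs_A1, sigs_A0, sig_A1]
  · rw [sigs_A2, sigs_A1, sig_A2]
  · rw [sigs_fix hn hz, sigs_fix hn hz, sig_fix hn hz]

/-- the Condorcet-cycle profile with `2c+3` voters -/
def PP (hn : 3 ≤ n) : ℕ → Pref n := fun i =>
  if i = 0 then 1 else if i = 1 then sig hn else if i = 2 then sig hn * sig hn
    else if Odd i then 1 else rho0 n

def p3 (hn : 3 ≤ n) (c : ℕ) : Profile n (2*c+3) := fun i => PP hn (i : ℕ)

lemma sum_PP (f : Pref n → ℕ) : ∀ c, ∑ i ∈ Finset.range (2*c+3), f (PP hn i)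
    = f 1 + f (sig hn) + f (sig hn * sig hn) + c * (f 1 + f (rho0 n)) := by
  intro c
  induction c with
  | zero =>
    rw [show 2*0+3 = 3 from rfl]
    rw [Finset.sum_range_succ, Finset.sum_range_succ, Finset.sum_range_succ,
      Finset.sum_range_zero]
    rw [show PP hn 0 = 1 from rfl, show PP hn 1 = sig hn from rfl,
      show PP hn 2 = sig hn * sig hn from rfl]
    omega
  | succ c ih =>
    have e : 2*(c+1)+3 = (2*c+3) + 1 + 1 := by ring
    rw [e, Finset.sum_range_succ, Finset.sum_range_succ, ih]
    have e1 : PP hn (2*c+3) = 1 := by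
      rw [PP]
      rw [if_neg (by omega), if_neg (by omega), if_neg (by omega),
        if_pos (by rw [Nat.odd_iff]; omega)]
    have e2 : PP hn (2*c+3+1) = rho0 n := by
      rw [PP]
      rw [if_neg (by omega), if_neg (by omega), if_neg (by omega),
        if_neg (by rw [Nat.odd_iff]; omega)]
    rw [e1, e2]
    ring

/-- wt for the profile `p3`, in terms of the three cycle voters -/
lemma wt_p3 {c : ℕ} {x y : Fin n} (hxy : x ≠ y) :
    wt (p3 hn c) x y = ((if x < y then 1 else 0) + (if (sig hn).symm x < (sig hn).symm y then 1 else 0)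
      + (if (sig hn).symm ((sig hn).symm x) < (sig hn).symm ((sig hn).symm y) then 1 else 0)) + c := by
  rw [wt, Finset.card_filter]
  have e0 : (∑ i : Fin (2*c+3), if prefGT (p3 hn c i) x y then (1:ℕ) else 0)
      = ∑ i ∈ Finset.range (2*c+3), (fun q => if prefGT q x y then (1:ℕ) else 0) (PP hn i) :=
    Fin.sum_univ_eq_sum_range (fun i => if prefGT (PP hn i) x y then (1:ℕ) else 0) (2*c+3)
  refine e0.trans ((sum_PP hn (fun q => if prefGT q x y then (1:ℕ) else 0) c).trans ?_)
  have hpair : ((if prefGT (1:Pref n) x y then (1:ℕ) else 0)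
      + (if prefGT (rho0 n) x y then (1:ℕ) else 0)) = 1 := by
    rcases lt_or_gt_of_ne hxy with hlt | hlt
    · rw [if_pos (prefGT_one_iff.mpr hlt),
        if_neg (fun hcon => absurd (prefGT_rho0_iff.mp hcon) (asymm hlt))]
    · rw [if_neg (fun hcon => absurd (prefGT_one_iff.mp hcon) (asymm hlt)),
        if_pos (prefGT_rho0_iff.mpr hlt)]
  rw [hpair, mul_one]
  rfl


lemma wt_p3' {c : ℕ} {x y : Fin n} (hxy : x ≠ y) :
    wt (p3 hn c) x y = ((if x < y then 1 else 0)
      + (if (sig hn).symm x < (sig hn).symm y then 1 else 0)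
      + (if sig hn x < sig hn y then 1 else 0)) + c := by
  rw [wt_p3 hn hxy, sig_symm_symm, sig_symm_symm]

lemma wt01 {c : ℕ} : wt (p3 hn c) (A0 hn) (A1 hn) = c + 2 := by
  rw [wt_p3' hn (A_ne01 hn), sigs_A0, sigs_A1, sig_A0, sig_A1]
  rw [if_pos (by simp [A0, A1, Fin.lt_def]), if_neg (by simp [A0, A2, Fin.lt_def]),
    if_pos (by simp [A1, A2, Fin.lt_def])]
  omega

lemma wt10 {c : ℕ} : wt (p3 hn c) (A1 hn) (A0 hn) = c + 1 := by
  rw [wt_p3' hn (Ne.symm (A_ne01 hn)), sigs_A0, sigs_A1, sig_A0, sig_A1]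
  rw [if_neg (by simp [A0, A1, Fin.lt_def]), if_pos (by simp [A0, A2, Fin.lt_def]),
    if_neg (by simp [A1, A2, Fin.lt_def])]
  omega

lemma wt12 {c : ℕ} : wt (p3 hn c) (A1 hn) (A2 hn) = c + 2 := by
  rw [wt_p3' hn (A_ne12 hn), sigs_A1, sigs_A2, sig_A1, sig_A2]
  rw [if_pos (by simp [A1, A2, Fin.lt_def]), if_pos (by simp [A0, A1, Fin.lt_def]),
    if_neg (by simp [A0, A2, Fin.lt_def])]
  omega

lemma wt21 {c : ℕ} : wt (p3 hn c) (A2 hn) (A1 hn) = c + 1 := by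
  rw [wt_p3' hn (Ne.symm (A_ne12 hn)), sigs_A1, sigs_A2, sig_A1, sig_A2]
  rw [if_neg (by simp [A1, A2, Fin.lt_def]), if_neg (by simp [A0, A1, Fin.lt_def]),
    if_pos (by simp [A0, A2, Fin.lt_def])]
  omega

lemma wt20 {c : ℕ} : wt (p3 hn c) (A2 hn) (A0 hn) = c + 2 := by
  rw [wt_p3' hn (Ne.symm (A_ne02 hn)), sigs_A0, sigs_A2, sig_A0, sig_A2]
  rw [if_neg (by simp [A0, A2, Fin.lt_def]), if_pos (by simp [A1, A2, Fin.lt_def]),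
    if_pos (by simp [A0, A1, Fin.lt_def])]
  omega

lemma wt02 {c : ℕ} : wt (p3 hn c) (A0 hn) (A2 hn) = c + 1 := by
  rw [wt_p3' hn (A_ne02 hn), sigs_A0, sigs_A2, sig_A0, sig_A2]
  rw [if_pos (by simp [A0, A2, Fin.lt_def]), if_neg (by simp [A1, A2, Fin.lt_def]),
    if_neg (by simp [A0, A1, Fin.lt_def])]
  omega

lemma sig_lt3 {z : Fin n} (hz : (z:ℕ) < 3) : ((sig hn z : Fin n) : ℕ) < 3 := by
  rcases fin_cases3 hn z with rfl | rfl | rfl | h3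
  · rw [sig_A0]; simp [A1]
  · rw [sig_A1]; simp [A2]
  · rw [sig_A2]; simp [A0]
  · omega

lemma sigs_lt3 {z : Fin n} (hz : (z:ℕ) < 3) : (((sig hn).symm z : Fin n) : ℕ) < 3 := by
  rcases fin_cases3 hn z with rfl | rfl | rfl | h3
  · rw [sigs_A0]; simp [A2]
  · rw [sigs_A1]; simp [A0]
  · rw [sigs_A2]; simp [A1]
  · omega

lemma wt_aj {c : ℕ} {x y : Fin n} (hx : (x:ℕ) < 3) (hy : 3 ≤ (y:ℕ)) :
    wt (p3 hn c) x y = c + 3 := by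
  have hxy : x ≠ y := fun e => by rw [e] at hx; omega
  rw [wt_p3' hn hxy, sig_fix hn hy, sigs_fix hn hy]
  have l1 := sig_lt3 hn hx
  have l2 := sigs_lt3 hn hx
  rw [if_pos (by rw [Fin.lt_def]; omega), if_pos (by rw [Fin.lt_def]; omega),
    if_pos (by rw [Fin.lt_def]; omega)]
  omega

lemma wt_ja {c : ℕ} {x y : Fin n} (hx : 3 ≤ (x:ℕ)) (hy : (y:ℕ) < 3) :
    wt (p3 hn c) x y = c := by
  have hxy : x ≠ y := fun e => by rw [e] at hx; omega
  rw [wt_p3' hn hxy, sig_fix hn hx, sigs_fix hn hx]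
  have l1 := sig_lt3 hn hy
  have l2 := sigs_lt3 hn hy
  rw [if_neg (by rw [Fin.lt_def]; omega), if_neg (by rw [Fin.lt_def]; omega),
    if_neg (by rw [Fin.lt_def]; omega)]
  omega

lemma wt_jk {c : ℕ} {x y : Fin n} (hx : 3 ≤ (x:ℕ)) (hy : 3 ≤ (y:ℕ)) (hlt : x < y) :
    wt (p3 hn c) x y = c + 3 := by
  rw [wt_p3' hn (ne_of_lt hlt), sig_fix hn hy, sigs_fix hn hy, sig_fix hn hx, sigs_fix hn hx]
  rw [if_pos hlt]
  omega

lemma wt_kj {c : ℕ} {x y : Fin n} (hx : 3 ≤ (x:ℕ)) (hy : 3 ≤ (y:ℕ)) (hlt : y < x) :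
    wt (p3 hn c) x y = c := by
  rw [wt_p3' hn (ne_of_gt hlt), sig_fix hn hy, sigs_fix hn hy, sig_fix hn hx, sigs_fix hn hx]
  rw [if_neg (asymm hlt)]
  omega

-- ===== Borda for p3 =====
lemma borda_p3 {c : ℕ} (x : Fin n) : bordaScore (p3 hn c) x
    = ((n - 1 - (x:ℕ)) + (n - 1 - (((sig hn).symm x : Fin n):ℕ))
      + (n - 1 - (((sig hn) x : Fin n):ℕ))) + c * (n - 1) := by
  rw [bordaScore]
  have e0 : (∑ i : Fin (2*c+3), (n - 1 - (((p3 hn c i).symm x : Fin n) : ℕ)))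
      = ∑ i ∈ Finset.range (2*c+3), (fun q : Pref n => n - 1 - ((q.symm x : Fin n):ℕ)) (PP hn i) :=
    Fin.sum_univ_eq_sum_range (fun i => n - 1 - (((PP hn i).symm x : Fin n) : ℕ)) (2*c+3)
  refine e0.trans (((sum_PP hn (fun q : Pref n => n - 1 - ((q.symm x : Fin n):ℕ)) c)).trans ?_)
  have h1 : (((1 : Pref n).symm x : Fin n) : ℕ) = (x:ℕ) := rfl
  have h2 : (((rho0 n).symm x : Fin n) : ℕ) = n - ((x:ℕ)+1) := Fin.val_rev x
  have h3 : (((sig hn * sig hn).symm x : Fin n) : ℕ) = (((sig hn) x : Fin n):ℕ) := by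
    show ((((sig hn).symm ((sig hn).symm x)) : Fin n) : ℕ) = _
    rw [sig_symm_symm]
  rw [h1, h2, h3]
  have := x.isLt
  have e : (n - 1 - (x:ℕ)) + (n - 1 - (n - ((x:ℕ)+1))) = n - 1 := by omega
  rw [e]

lemma borda_p3_A0 {c : ℕ} : bordaScore (p3 hn c) (A0 hn) = ((n-1) + (n-2) + (n-3)) + c*(n-1) := by
  rw [borda_p3 hn, sigs_A0, sig_A0]
  have : (A0 hn : ℕ) = 0 := rfl
  have : (A1 hn : ℕ) = 1 := rfl
  have : (A2 hn : ℕ) = 2 := rfl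
  simp [A0, A1, A2]
  omega

lemma borda_p3_A1 {c : ℕ} : bordaScore (p3 hn c) (A1 hn) = ((n-1) + (n-2) + (n-3)) + c*(n-1) := by
  rw [borda_p3 hn, sigs_A1, sig_A1]
  simp [A0, A1, A2]
  omega

lemma borda_p3_A2 {c : ℕ} : bordaScore (p3 hn c) (A2 hn) = ((n-1) + (n-2) + (n-3)) + c*(n-1) := by
  rw [borda_p3 hn, sigs_A2, sig_A2]
  simp [A0, A1, A2]
  omega

lemma borda_p3_j {c : ℕ} {x : Fin n} (hx : 3 ≤ (x:ℕ)) :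
    bordaScore (p3 hn c) x = 3 * (n - 1 - (x:ℕ)) + c*(n-1) := by
  rw [borda_p3 hn, sigs_fix hn hx, sig_fix hn hx]
  omega

lemma borda_p3_le {c : ℕ} (y : Fin n) :
    bordaScore (p3 hn c) y ≤ ((n-1) + (n-2) + (n-3)) + c*(n-1) := by
  rcases fin_cases3 hn y with rfl | rfl | rfl | h3
  · rw [borda_p3_A0]
  · rw [borda_p3_A1]
  · rw [borda_p3_A2]
  · rw [borda_p3_j hn h3]
    have := y.isLt
    have hn' : 3 ≤ n := hn
    omega

lemma bor_p3_mem0 {c : ℕ} : A0 hn ∈ Bor (p3 hn c) := by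
  intro y
  rw [borda_p3_A0]
  exact borda_p3_le hn y

lemma bor_p3_mem1 {c : ℕ} : A1 hn ∈ Bor (p3 hn c) := by
  intro y
  rw [borda_p3_A1]
  exact borda_p3_le hn y


-- ===== Copeland for p3 =====

lemma val_A0 : ((A0 hn : Fin n) : ℕ) = 0 := rfl
lemma val_A1 : ((A1 hn : Fin n) : ℕ) = 1 := rfl
lemma val_A2 : ((A2 hn : Fin n) : ℕ) = 2 := rfl

lemma filter_lt3_eq : (Finset.univ.filter fun y : Fin n => (y:ℕ) < 3)
    = {A0 hn, A1 hn, A2 hn} := by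
  ext y
  simp only [Finset.mem_filter, Finset.mem_univ, true_and, Finset.mem_insert,
    Finset.mem_singleton]
  constructor
  · intro hy
    rcases fin_cases3 hn y with rfl | rfl | rfl | h3
    · exact Or.inl rfl
    · exact Or.inr (Or.inl rfl)
    · exact Or.inr (Or.inr rfl)
    · omega
  · rintro (rfl | rfl | rfl) <;> simp [A0, A1, A2]

include hn in
lemma card_ge3 : (Finset.univ.filter fun y : Fin n => 3 ≤ (y:ℕ)).card = n - 3 := by
  have h2 : (Finset.univ.filter fun y : Fin n => (y:ℕ) < 3).card = 3 := by
    rw [filter_lt3_eq hn]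
    rw [Finset.card_insert_of_notMem (by
      simp only [Finset.mem_insert, Finset.mem_singleton]
      push_neg
      exact ⟨A_ne01 hn, A_ne02 hn⟩),
      Finset.card_insert_of_notMem (by
      simp only [Finset.mem_singleton]
      exact A_ne12 hn), Finset.card_singleton]
  have h3 := Finset.card_filter_add_card_filter_not
    (s := (Finset.univ : Finset (Fin n))) (p := fun y => (y:ℕ) < 3)
  rw [Finset.card_univ, Fintype.card_fin, h2] at h3
  have h4 : (Finset.univ.filter fun y : Fin n => ¬ (y:ℕ) < 3)
      = Finset.univ.filter fun y : Fin n => 3 ≤ (y:ℕ) := by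
    apply Finset.filter_congr
    intro y _
    simp only [not_lt]
  rw [h4] at h3
  omega

lemma thr_p3 (c : ℕ) : ((2*c+3) + 2) / 2 = c + 2 := by omega

lemma cop_p3_A0 {c : ℕ} : copScore (p3 hn c) (A0 hn) = ((n - 3 : ℕ) : ℤ) := by
  rw [copScore, thr_p3]
  have e1 : (Finset.univ.filter fun y => c + 2 ≤ wt (p3 hn c) (A0 hn) y)
      = insert (A1 hn) (Finset.univ.filter fun y : Fin n => 3 ≤ (y:ℕ)) := by
    ext y
    simp only [Finset.mem_filter, Finset.mem_univ, true_and, Finset.mem_insert]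
    constructor
    · intro hy
      rcases fin_cases3 hn y with rfl | rfl | rfl | h3
      · rw [wt_self] at hy; omega
      · exact Or.inl rfl
      · rw [wt02 hn] at hy; omega
      · exact Or.inr h3
    · rintro (rfl | h3)
      · rw [wt01 hn]
      · rw [wt_aj hn (by rw [val_A0]; omega) h3]
        omega
  have e2 : (Finset.univ.filter fun y => c + 2 ≤ wt (p3 hn c) y (A0 hn)) = {A2 hn} := by
    ext y
    simp only [Finset.mem_filter, Finset.mem_univ, true_and, Finset.mem_singleton]
    constructor
    · intro hy
      rcases fin_cases3 hn y with rfl | rfl | rfl | h3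
      · rw [wt_self] at hy; omega
      · rw [wt10 hn] at hy; omega
      · rfl
      · rw [wt_ja hn h3 (by rw [val_A0]; omega)] at hy; omega
    · rintro rfl
      rw [wt20 hn]
  rw [e1, e2, Finset.card_insert_of_notMem (by
    simp only [Finset.mem_filter, Finset.mem_univ, true_and, val_A1]
    omega), card_ge3 hn, Finset.card_singleton]
  have : 3 ≤ n := hn
  omega

lemma cop_p3_A1 {c : ℕ} : copScore (p3 hn c) (A1 hn) = ((n - 3 : ℕ) : ℤ) := by
  rw [copScore, thr_p3]
  have e1 : (Finset.univ.filter fun y => c + 2 ≤ wt (p3 hn c) (A1 hn) y)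
      = insert (A2 hn) (Finset.univ.filter fun y : Fin n => 3 ≤ (y:ℕ)) := by
    ext y
    simp only [Finset.mem_filter, Finset.mem_univ, true_and, Finset.mem_insert]
    constructor
    · intro hy
      rcases fin_cases3 hn y with rfl | rfl | rfl | h3
      · rw [wt10 hn] at hy; omega
      · rw [wt_self] at hy; omega
      · exact Or.inl rfl
      · exact Or.inr h3
    · rintro (rfl | h3)
      · rw [wt12 hn]
      · rw [wt_aj hn (by rw [val_A1]; omega) h3]
        omega
  have e2 : (Finset.univ.filter fun y => c + 2 ≤ wt (p3 hn c) y (A1 hn)) = {A0 hn} := by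
    ext y
    simp only [Finset.mem_filter, Finset.mem_univ, true_and, Finset.mem_singleton]
    constructor
    · intro hy
      rcases fin_cases3 hn y with rfl | rfl | rfl | h3
      · rfl
      · rw [wt_self] at hy; omega
      · rw [wt21 hn] at hy; omega
      · rw [wt_ja hn h3 (by rw [val_A1]; omega)] at hy; omega
    · rintro rfl
      rw [wt01 hn]
  rw [e1, e2, Finset.card_insert_of_notMem (by
    simp only [Finset.mem_filter, Finset.mem_univ, true_and, val_A2]
    omega), card_ge3 hn, Finset.card_singleton]
  have : 3 ≤ n := hn
  omega

lemma cop_p3_A2 {c : ℕ} : copScore (p3 hn c) (A2 hn) = ((n - 3 : ℕ) : ℤ) := by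
  rw [copScore, thr_p3]
  have e1 : (Finset.univ.filter fun y => c + 2 ≤ wt (p3 hn c) (A2 hn) y)
      = insert (A0 hn) (Finset.univ.filter fun y : Fin n => 3 ≤ (y:ℕ)) := by
    ext y
    simp only [Finset.mem_filter, Finset.mem_univ, true_and, Finset.mem_insert]
    constructor
    · intro hy
      rcases fin_cases3 hn y with rfl | rfl | rfl | h3
      · exact Or.inl rfl
      · rw [wt21 hn] at hy; omega
      · rw [wt_self] at hy; omega
      · exact Or.inr h3
    · rintro (rfl | h3)
      · rw [wt20 hn]
      · rw [wt_aj hn (by rw [val_A2]; omega) h3]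
        omega
  have e2 : (Finset.univ.filter fun y => c + 2 ≤ wt (p3 hn c) y (A2 hn)) = {A1 hn} := by
    ext y
    simp only [Finset.mem_filter, Finset.mem_univ, true_and, Finset.mem_singleton]
    constructor
    · intro hy
      rcases fin_cases3 hn y with rfl | rfl | rfl | h3
      · rw [wt02 hn] at hy; omega
      · rfl
      · rw [wt_self] at hy; omega
      · rw [wt_ja hn h3 (by rw [val_A2]; omega)] at hy; omega
    · rintro rfl
      rw [wt12 hn]
  rw [e1, e2, Finset.card_insert_of_notMem (by
    simp only [Finset.mem_filter, Finset.mem_univ, true_and, val_A0]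
    omega), card_ge3 hn, Finset.card_singleton]
  have : 3 ≤ n := hn
  omega

lemma cop_p3_j {c : ℕ} {x : Fin n} (hx : 3 ≤ (x:ℕ)) :
    copScore (p3 hn c) x ≤ ((n - 3 : ℕ) : ℤ) := by
  rw [copScore, thr_p3]
  have hW : (Finset.univ.filter fun y => c + 2 ≤ wt (p3 hn c) x y)
      ⊆ Finset.univ.filter fun y : Fin n => 3 ≤ (y:ℕ) := by
    intro y hy
    simp only [Finset.mem_filter, Finset.mem_univ, true_and] at hy ⊢
    rcases fin_cases3 hn y with rfl | rfl | rfl | h3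
    · rw [wt_ja hn hx (by rw [val_A0]; omega)] at hy; omega
    · rw [wt_ja hn hx (by rw [val_A1]; omega)] at hy; omega
    · rw [wt_ja hn hx (by rw [val_A2]; omega)] at hy; omega
    · exact h3
  have hWc : (Finset.univ.filter fun y => c + 2 ≤ wt (p3 hn c) x y).card ≤ n - 3 := by
    rw [← card_ge3 hn]
    exact Finset.card_le_card hW
  have hL : ({A0 hn, A1 hn, A2 hn} : Finset (Fin n))
      ⊆ Finset.univ.filter fun y => c + 2 ≤ wt (p3 hn c) y x := by
    intro y hy
    simp only [Finset.mem_insert, Finset.mem_singleton] at hy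
    simp only [Finset.mem_filter, Finset.mem_univ, true_and]
    rcases hy with rfl | rfl | rfl
    · rw [wt_aj hn (by rw [val_A0]; omega) hx]; omega
    · rw [wt_aj hn (by rw [val_A1]; omega) hx]; omega
    · rw [wt_aj hn (by rw [val_A2]; omega) hx]; omega
  have hLc : 3 ≤ (Finset.univ.filter fun y => c + 2 ≤ wt (p3 hn c) y x).card := by
    have hc3 : ({A0 hn, A1 hn, A2 hn} : Finset (Fin n)).card = 3 := by
      rw [← filter_lt3_eq hn]
      have h3 := Finset.card_filter_add_card_filter_not
        (s := (Finset.univ : Finset (Fin n))) (p := fun y : Fin n => (y:ℕ) < 3)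
      have h4 : (Finset.univ.filter fun y : Fin n => ¬ (y:ℕ) < 3)
          = Finset.univ.filter fun y : Fin n => 3 ≤ (y:ℕ) := by
        apply Finset.filter_congr
        intro y _
        simp only [not_lt]
      rw [Finset.card_univ, Fintype.card_fin, h4, card_ge3 hn] at h3
      omega
    calc 3 = ({A0 hn, A1 hn, A2 hn} : Finset (Fin n)).card := hc3.symm
    _ ≤ _ := Finset.card_le_card hL
  omega

lemma cop_p3_mem0 {c : ℕ} : A0 hn ∈ Cop (p3 hn c) := by
  intro y
  rw [cop_p3_A0 hn]
  rcases fin_cases3 hn y with rfl | rfl | rfl | h3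
  · rw [cop_p3_A0 hn]
  · rw [cop_p3_A1 hn]
  · rw [cop_p3_A2 hn]
  · exact cop_p3_j hn h3

lemma cop_p3_mem1 {c : ℕ} : A1 hn ∈ Cop (p3 hn c) := by
  intro y
  rw [cop_p3_A1 hn]
  rcases fin_cases3 hn y with rfl | rfl | rfl | h3
  · rw [cop_p3_A0 hn]
  · rw [cop_p3_A1 hn]
  · rw [cop_p3_A2 hn]
  · exact cop_p3_j hn h3

-- ===== Minimax for p3 =====

lemma min_p3_A0 {c : ℕ} : minScore (p3 hn c) (A0 hn) = c + 1 := by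
  apply le_antisymm
  · exact Nat.sInf_le ⟨A2 hn, Ne.symm (A_ne02 hn), wt02 hn⟩
  · apply le_csInf
    · exact ⟨c+1, A2 hn, Ne.symm (A_ne02 hn), wt02 hn⟩
    rintro m ⟨y, hy, rfl⟩
    rcases fin_cases3 hn y with rfl | rfl | rfl | h3
    · exact absurd rfl hy
    · rw [wt01 hn]; omega
    · rw [wt02 hn]
    · rw [wt_aj hn (by rw [val_A0]; omega) h3]; omega

lemma min_p3_A1 {c : ℕ} : minScore (p3 hn c) (A1 hn) = c + 1 := by
  apply le_antisymm
  · exact Nat.sInf_le ⟨A0 hn, A_ne01 hn, wt10 hn⟩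
  · apply le_csInf
    · exact ⟨c+1, A0 hn, A_ne01 hn, wt10 hn⟩
    rintro m ⟨y, hy, rfl⟩
    rcases fin_cases3 hn y with rfl | rfl | rfl | h3
    · rw [wt10 hn]
    · exact absurd rfl hy
    · rw [wt12 hn]; omega
    · rw [wt_aj hn (by rw [val_A1]; omega) h3]; omega

lemma min_p3_le {c : ℕ} (y : Fin n) : minScore (p3 hn c) y ≤ c + 1 := by
  rcases fin_cases3 hn y with rfl | rfl | rfl | h3
  · rw [min_p3_A0 hn]
  · rw [min_p3_A1 hn]
  · calc minScore (p3 hn c) (A2 hn) ≤ wt (p3 hn c) (A2 hn) (A1 hn) :=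
      Nat.sInf_le ⟨A1 hn, A_ne12 hn, rfl⟩
    _ = c + 1 := wt21 hn
  · calc minScore (p3 hn c) y ≤ wt (p3 hn c) y (A0 hn) :=
      Nat.sInf_le ⟨A0 hn, (by intro e; rw [← e] at h3; rw [val_A0] at h3; omega), rfl⟩
    _ ≤ c + 1 := by rw [wt_ja hn h3 (by rw [val_A0]; omega)]; omega

lemma min_p3_mem0 {c : ℕ} : A0 hn ∈ MinC (p3 hn c) := by
  intro y
  rw [min_p3_A0 hn]
  exact min_p3_le hn y

lemma min_p3_mem1 {c : ℕ} : A1 hn ∈ MinC (p3 hn c) := by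
  intro y
  rw [min_p3_A1 hn]
  exact min_p3_le hn y


end n3

-- ===== general Kemeny adjacent-swap lemma =====
section kemswap
variable {n h : ℕ}

lemma swap_adj_lt {u v : Fin n} (huv : (u:ℕ) + 1 = (v:ℕ)) {a b : Fin n}
    (h1 : ¬(a = u ∧ b = v)) (h2 : ¬(a = v ∧ b = u)) :
    (Equiv.swap u v a < Equiv.swap u v b ↔ a < b) := by
  have key : ∀ t : Fin n, ((Equiv.swap u v t : Fin n) : ℕ)
      = if t = u then (v:ℕ) else if t = v then (u:ℕ) else (t:ℕ) := by
    intro t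
    rw [Equiv.swap_apply_def]
    split_ifs <;> rfl
  rw [Fin.lt_def, Fin.lt_def, key a, key b]
  simp only [Fin.ext_iff] at h1 h2
  split_ifs with c1 c2 c3 c4 c5 <;>
    simp only [Fin.ext_iff] at * <;> omega

lemma kem_swap (p : Profile n h) (q : Pref n) {u v : Fin n} (huv : (u:ℕ) + 1 = (v:ℕ)) :
    kemScore p (q * Equiv.swap u v) + wt p (q u) (q v)
      = kemScore p q + wt p (q v) (q u) := by
  have hune : u ≠ v := fun e => by rw [e] at huv; omega
  have hxy : q u ≠ q v := fun e => hune (q.injective e)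
  set x := q u with hxdef
  set y := q v with hydef
  set q' := q * Equiv.swap u v with hq'def
  have hsymm : ∀ z, q'.symm z = Equiv.swap u v (q.symm z) := by
    intro z
    show ((Equiv.swap u v).trans q).symm z = _
    rw [Equiv.symm_trans_apply, Equiv.symm_swap]
  have hqsx : q.symm x = u := Equiv.symm_apply_apply q u
  have hqsy : q.symm y = v := Equiv.symm_apply_apply q v
  set A : Finset (Fin n × Fin n) := {(x,y),(y,x)} with hAdef
  have hAne : ((x,y) : Fin n × Fin n) ≠ (y,x) := fun e => hxy (congrArg Prod.fst e)
  have hsplit : ∀ Q : Pref n, kemScore p Q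
      = (∑ z ∈ Finset.univ \ A, if prefGT Q z.1 z.2 then wt p z.1 z.2 else 0)
        + ∑ z ∈ A, (if prefGT Q z.1 z.2 then wt p z.1 z.2 else 0) :=
    fun Q => (Finset.sum_sdiff (Finset.subset_univ A)).symm
  have hoff : ∀ z ∈ Finset.univ \ A,
      (if prefGT q' z.1 z.2 then wt p z.1 z.2 else 0)
        = (if prefGT q z.1 z.2 then wt p z.1 z.2 else 0) := by
    intro z hz
    rw [Finset.mem_sdiff, hAdef, Finset.mem_insert, Finset.mem_singleton] at hz
    push_neg at hz
    obtain ⟨-, hz1, hz2⟩ := hz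
    have hiff : prefGT q' z.1 z.2 ↔ prefGT q z.1 z.2 := by
      unfold prefGT
      rw [hsymm, hsymm]
      apply swap_adj_lt huv
      · rintro ⟨e1, e2⟩
        apply hz1
        have p1 : z.1 = x := by rw [← hqsx] at e1; exact q.symm.injective e1
        have p2 : z.2 = y := by rw [← hqsy] at e2; exact q.symm.injective e2
        rw [← p1, ← p2]
      · rintro ⟨e1, e2⟩
        apply hz2
        have p1 : z.1 = y := by rw [← hqsy] at e1; exact q.symm.injective e1
        have p2 : z.2 = x := by rw [← hqsx] at e2; exact q.symm.injective e2
        rw [← p1, ← p2]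
    by_cases hp : prefGT q z.1 z.2
    · rw [if_pos hp, if_pos (hiff.mpr hp)]
    · rw [if_neg hp, if_neg (fun hc => hp (hiff.mp hc))]
  have hAq : (∑ z ∈ A, if prefGT q z.1 z.2 then wt p z.1 z.2 else 0) = wt p x y := by
    rw [hAdef, Finset.sum_pair hAne]
    have hp1 : prefGT q x y := by unfold prefGT; rw [hqsx, hqsy, Fin.lt_def]; omega
    rw [if_pos hp1, if_neg ((not_prefGT_iff hxy.symm).mpr hp1), add_zero]
  have hAq' : (∑ z ∈ A, if prefGT q' z.1 z.2 then wt p z.1 z.2 else 0) = wt p y x := by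
    rw [hAdef, Finset.sum_pair hAne]
    have hp1 : prefGT q' y x := by
      unfold prefGT
      rw [hsymm, hsymm, hqsx, hqsy, Equiv.swap_apply_left, Equiv.swap_apply_right, Fin.lt_def]
      omega
    rw [if_pos hp1, if_neg ((not_prefGT_iff hxy).mpr hp1), zero_add]
  have hs1 := hsplit q
  have hs2 := hsplit q'
  rw [Finset.sum_congr rfl hoff] at hs2
  omega

end kemswap

-- ===== Kemeny for p3 =====
section n3b
variable {n : ℕ} (hn : 3 ≤ n)

lemma sig_sig (z : Fin n) : sig hn (sig hn z) = (sig hn).symm z := by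
  have h := sig_symm_symm hn (sig hn z)
  rw [Equiv.symm_apply_apply] at h
  exact h.symm

lemma wt_sig {c : ℕ} {x y : Fin n} (hxy : x ≠ y) :
    wt (p3 hn c) (sig hn x) (sig hn y) = wt (p3 hn c) x y := by
  have hxy' : sig hn x ≠ sig hn y := fun e => hxy ((sig hn).injective e)
  rw [wt_p3' hn hxy', wt_p3' hn hxy]
  rw [Equiv.symm_apply_apply, Equiv.symm_apply_apply, sig_sig hn x, sig_sig hn y]
  omega

lemma kem_sig {c : ℕ} (q : Pref n) :
    kemScore (p3 hn c) (sig hn * q) = kemScore (p3 hn c) q := by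
  rw [kemScore, kemScore]
  refine (Fintype.sum_equiv (Equiv.prodCongr (sig hn) (sig hn))
    (fun z => if prefGT q z.1 z.2 then wt (p3 hn c) z.1 z.2 else 0)
    (fun z => if prefGT (sig hn * q) z.1 z.2 then wt (p3 hn c) z.1 z.2 else 0) ?_).symm
  intro z
  have hpref : prefGT (sig hn * q) (sig hn z.1) (sig hn z.2) ↔ prefGT q z.1 z.2 := by
    show q.symm ((sig hn).symm (sig hn z.1)) < q.symm ((sig hn).symm (sig hn z.2)) ↔ _
    rw [Equiv.symm_apply_apply, Equiv.symm_apply_apply]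
    exact Iff.rfl
  show (if prefGT q z.1 z.2 then wt (p3 hn c) z.1 z.2 else 0)
      = (if prefGT (sig hn * q) (sig hn z.1) (sig hn z.2)
        then wt (p3 hn c) (sig hn z.1) (sig hn z.2) else 0)
  by_cases hz : prefGT q z.1 z.2
  · have hne : z.1 ≠ z.2 := fun e => not_prefGT_self q z.2 (by rw [e] at hz; exact hz)
    rw [if_pos (hpref.mpr hz), if_pos hz, wt_sig hn hne]
  · rw [if_neg (fun hc => hz (hpref.mp hc)), if_neg hz]

lemma kem_top {c : ℕ} {q : Pref n} (hq : q ∈ KemMaxSet (p3 hn c)) :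
    ((q ⟨0, by omega⟩ : Fin n) : ℕ) < 3 := by
  by_contra htop
  push_neg at htop
  set S := Finset.univ.filter (fun k : Fin n => ((q k : Fin n) : ℕ) < 3) with hSdef
  have hSne : S.Nonempty := by
    refine ⟨q.symm (A0 hn), ?_⟩
    rw [hSdef, Finset.mem_filter]
    refine ⟨Finset.mem_univ _, ?_⟩
    rw [Equiv.apply_symm_apply, val_A0 hn]
    omega
  set u := S.min' hSne with hudef
  have huS : u ∈ S := S.min'_mem hSne
  have hu3 : ((q u : Fin n) : ℕ) < 3 := (Finset.mem_filter.mp huS).2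
  have hu0 : (u:ℕ) ≠ 0 := by
    intro e
    have : u = ⟨0, by omega⟩ := Fin.ext e
    rw [this] at hu3
    omega
  set w : Fin n := ⟨(u:ℕ) - 1, by have := u.isLt; omega⟩ with hwdef
  have hww : (w:ℕ) + 1 = (u:ℕ) := by
    show (u:ℕ) - 1 + 1 = (u:ℕ)
    omega
  have hw3 : 3 ≤ ((q w : Fin n) : ℕ) := by
    by_contra hcon
    push_neg at hcon
    have hwS : w ∈ S := by
      rw [hSdef, Finset.mem_filter]
      exact ⟨Finset.mem_univ _, hcon⟩
    have := S.min'_le w hwS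
    rw [← hudef, Fin.le_def] at this
    rw [hwdef] at this
    simp only at this
    omega
  have hswap := kem_swap (p3 hn c) q hww
  rw [wt_ja hn hw3 hu3, wt_aj hn hu3 hw3] at hswap
  have := hq (q * Equiv.swap w u)
  omega

lemma kem_p3_mem {c : ℕ} : ∃ x y : Fin n, x ≠ y ∧ x ∈ Kem (p3 hn c) ∧ y ∈ Kem (p3 hn c) := by
  obtain ⟨q, hq⟩ := Finite.exists_max (fun q => kemScore (p3 hn c) q)
  have hqmax : q ∈ KemMaxSet (p3 hn c) := hq
  obtain ⟨x, hxeq⟩ : ∃ x : Fin n, q ⟨0, by omega⟩ = x := ⟨_, rfl⟩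
  have hqsx : q.symm x = ⟨0, by omega⟩ := by
    rw [← hxeq]
    exact Equiv.symm_apply_apply q _
  have hx : x ∈ Kem (p3 hn c) := ⟨q, hqmax, by rw [hqsx]⟩
  have hx3 : (x:ℕ) < 3 := hxeq ▸ kem_top hn hqmax
  have hsx : sig hn x ∈ Kem (p3 hn c) := by
    refine ⟨sig hn * q, ?_, ?_⟩
    · intro q'
      rw [kem_sig hn q]
      exact hqmax q'
    · show ((q.symm ((sig hn).symm (sig hn x)) : Fin n) : ℕ) = 0
      rw [Equiv.symm_apply_apply, hqsx]
  have hne : sig hn x ≠ x := by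
    rcases fin_cases3 hn x with rfl | rfl | rfl | h3
    · rw [sig_A0]; exact Ne.symm (A_ne01 hn)
    · rw [sig_A1]; exact Ne.symm (A_ne12 hn)
    · rw [sig_A2]; exact A_ne02 hn
    · omega
  exact ⟨x, sig hn x, fun e => hne e.symm, hx, hsx⟩

end n3b

-- ===== assembly =====
section final
variable {n h : ℕ}

lemma majority2 (hodd : Odd h) (p : Profile 2 h) :
    ∃ a b : Fin 2, a ≠ b ∧ wt p b a < wt p a b := by
  have h01 : (0:Fin 2) ≠ 1 := by decide
  have hsum := wt_add p h01
  obtain ⟨k, hk⟩ := hodd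
  rcases Nat.lt_or_ge (wt p 0 1) (wt p 1 0) with hlt | hge
  · exact ⟨1, 0, h01.symm, hlt⟩
  · have : wt p 1 0 < wt p 0 1 := by omega
    exact ⟨0, 1, h01, this⟩

theorem statement18' (hh : 2 ≤ h) (hn : 2 ≤ n) :
    (Resolute (Bor (n := n) (h := h)) ↔ (n = 2 ∧ Odd h)) ∧
    (Resolute (Cop (n := n) (h := h)) ↔ (n = 2 ∧ Odd h)) ∧
    (Resolute (MinC (n := n) (h := h)) ↔ (n = 2 ∧ Odd h)) ∧
    (Resolute (Kem (n := n) (h := h)) ↔ (n = 2 ∧ Odd h)) := by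
  have hres : (n = 2 ∧ Odd h) → Resolute (Bor (n := n) (h := h))
      ∧ Resolute (Cop (n := n) (h := h)) ∧ Resolute (MinC (n := n) (h := h))
      ∧ Resolute (Kem (n := n) (h := h)) := by
    rintro ⟨rfl, hodd⟩
    refine ⟨fun p => ?_, fun p => ?_, fun p => ?_, fun p => ?_⟩ <;>
      obtain ⟨a, b, hab, hw⟩ := majority2 hodd p
    · exact ⟨a, bor2_eq p hab hw⟩
    · exact ⟨a, cop2_eq p hab hw hodd⟩
    · exact ⟨a, min2_eq p hab hw⟩
    · exact ⟨a, kem2_eq p hab hw⟩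
  have hnot : ¬(n = 2 ∧ Odd h) → ¬ Resolute (Bor (n := n) (h := h))
      ∧ ¬ Resolute (Cop (n := n) (h := h)) ∧ ¬ Resolute (MinC (n := n) (h := h))
      ∧ ¬ Resolute (Kem (n := n) (h := h)) := by
    intro hcon
    rcases Nat.even_or_odd h with heven | hodd
    · obtain ⟨d, hd⟩ := heven
      have hd2 : h = 2 * d := by omega
      have hne : (⟨0, by omega⟩ : Fin n) ≠ ⟨1, by omega⟩ := by
        simp [Fin.ext_iff]
      refine ⟨not_resolute_of_two hne (pe n h) ?_ ?_,
        not_resolute_of_two hne (pe n h) ?_ ?_,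
        not_resolute_of_two hne (pe n h) ?_ ?_,
        not_resolute_of_two hne (pe n h) (kem_pe_mem hd2 _) (kem_pe_mem hd2 _)⟩
      · exact fun y => le_of_eq (by rw [borda_pe hd2, borda_pe hd2])
      · exact fun y => le_of_eq (by rw [borda_pe hd2, borda_pe hd2])
      · exact fun y => le_of_eq (by rw [cop_pe hd2, cop_pe hd2])
      · exact fun y => le_of_eq (by rw [cop_pe hd2, cop_pe hd2])
      · exact fun y => le_of_eq (by rw [min_pe hn hd2, min_pe hn hd2])
      · exact fun y => le_of_eq (by rw [min_pe hn hd2, min_pe hn hd2])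
    · have hn3 : 3 ≤ n := by
        rcases Nat.lt_or_ge n 3 with h3 | h3
        · exfalso
          exact hcon ⟨by omega, hodd⟩
        · exact h3
      obtain ⟨c, hc⟩ : ∃ c, h = 2*c+3 := by
        obtain ⟨k, hk⟩ := hodd
        exact ⟨k - 1, by omega⟩
      subst hc
      obtain ⟨x, y, hxy, hx, hy⟩ := kem_p3_mem hn3 (c := c)
      exact ⟨not_resolute_of_two (A_ne01 hn3) (p3 hn3 c) (bor_p3_mem0 hn3) (bor_p3_mem1 hn3),
        not_resolute_of_two (A_ne01 hn3) (p3 hn3 c) (cop_p3_mem0 hn3) (cop_p3_mem1 hn3),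
        not_resolute_of_two (A_ne01 hn3) (p3 hn3 c) (min_p3_mem0 hn3) (min_p3_mem1 hn3),
        not_resolute_of_two hxy (p3 hn3 c) hx hy⟩
  refine ⟨⟨fun r => ?_, fun hc => (hres hc).1⟩, ⟨fun r => ?_, fun hc => (hres hc).2.1⟩,
    ⟨fun r => ?_, fun hc => (hres hc).2.2.1⟩, ⟨fun r => ?_, fun hc => (hres hc).2.2.2⟩⟩
  · by_contra hcon; exact (hnot hcon).1 r
  · by_contra hcon; exact (hnot hcon).2.1 r
  · by_contra hcon; exact (hnot hcon).2.2.1 r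
  · by_contra hcon; exact (hnot hcon).2.2.2 r

end final

/-- each of the Borda, Copeland, Minimax and Kemeny sccs is resolute
if and only if `n = 2` and `h` is odd. -/
theorem statement18 {n h : ℕ} (hh : 2 ≤ h) (hn : 2 ≤ n) :
    (Resolute (Bor (n := n) (h := h)) ↔ (n = 2 ∧ Odd h)) ∧
    (Resolute (Cop (n := n) (h := h)) ↔ (n = 2 ∧ Odd h)) ∧
    (Resolute (MinC (n := n) (h := h)) ↔ (n = 2 ∧ Odd h)) ∧
    (Resolute (Kem (n := n) (h := h)) ↔ (n = 2 ∧ Odd h)) := by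
  exact statement18' hh hn
end

section
/- Let i ∈ H and let C be a social choice correspondence which is immune to the reversal bias of type 3. Then both the scc C^i, defined by C^i(p) = {x ∈ C(p) : x ⪰_{p_i} y for all y ∈ C(p)}, and the scc C_i, defined by C_i(p) = {x ∈ C(p) : y ⪰_{p_i} x for all y ∈ C(p)}, are immune to the reversal bias. -/
/-- `C^i`: the alternatives of `C(p)` that are best according to individual `i`. -/
def topSel {n h : ℕ} (i : Fin h) (C : SCC n h) : SCC n h :=
  fun p => {x ∈ C p | ∀ y ∈ C p, prefGE (p i) x y}

/-- `C_i`: the alternatives of `C(p)` that are worst according to individual `i`. -/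
def botSel {n h : ℕ} (i : Fin h) (C : SCC n h) : SCC n h :=
  fun p => {x ∈ C p | ∀ y ∈ C p, prefGE (p i) y x}

/-!
If `x` is the unique tie-broken winner both at `p` and at the reversed profile, then `x`
lies in `C p ∩ C (revProfile p)`, so type-3 immunity (applied to `p` and to its reversal)
forces both `C p` and `C (revProfile p)` to be all of `N`. The tie-breaking by individual
`i` then makes `x` both the best and the worst alternative of `p i`, impossible for `n ≥ 2`.
-/

def ImmuneType3 {n h : ℕ} (C : SCC n h) : Prop :=
  ∀ p : Profile n h, (C p ∩ C (revProfile p)).Nonempty → C p = Set.univ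

lemma revProfile_revProfile {n h : ℕ} (p : Profile n h) : revProfile (revProfile p) = p := by
  funext j
  simp only [revProfile, mul_assoc, rho0_mul_self, mul_one]

lemma prefGE_revProfile {n h : ℕ} (p : Profile n h) (i : Fin h) (x y : Fin n) :
    prefGE (revProfile p i) x y ↔ prefGE (p i) y x :=
  Fin.rev_le_rev

lemma subsingleton_of_best_of_worst {n : ℕ} {q : Pref n} {x : Fin n}
    (hbest : ∀ y, prefGE q x y) (hworst : ∀ y, prefGE q y x) : Subsingleton (Fin n) :=
  have heq : ∀ y, y = x := fun y => q.symm.injective (le_antisymm (hworst y) (hbest y))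
  ⟨fun y z => (heq y).trans (heq z).symm⟩

namespace ImmuneType3

variable {n h : ℕ} {C : SCC n h}

lemma eq_univ_of_mem_of_mem (hC : ImmuneType3 C) {p : Profile n h} {x : Fin n}
    (hp : x ∈ C p) (hr : x ∈ C (revProfile p)) :
    C p = Set.univ ∧ C (revProfile p) = Set.univ :=
  ⟨hC p ⟨x, hp, hr⟩, hC (revProfile p) ⟨x, hr, (revProfile_revProfile p).symm ▸ hp⟩⟩

lemma immune_topSel (hC : ImmuneType3 C) (hn : 2 ≤ n) (i : Fin h) : Immune (topSel i C) := by
  intro p x hx hrev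
  rw [hx] at hrev
  have hxp : x ∈ topSel i C p := hx ▸ rfl
  have hxr : x ∈ topSel i C (revProfile p) := hrev ▸ rfl
  obtain ⟨hp, hr⟩ := hC.eq_univ_of_mem_of_mem hxp.1 hxr.1
  have : Nontrivial (Fin n) := Fin.nontrivial_iff_two_le.mpr hn
  refine not_subsingleton (Fin n) (subsingleton_of_best_of_worst (q := p i) (x := x) ?_ ?_)
  · exact fun y => hxp.2 y (hp ▸ trivial)
  · exact fun y => (prefGE_revProfile p i x y).mp (hxr.2 y (hr ▸ trivial))

lemma immune_botSel (hC : ImmuneType3 C) (hn : 2 ≤ n) (i : Fin h) : Immune (botSel i C) := by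
  intro p x hx hrev
  rw [hx] at hrev
  have hxp : x ∈ botSel i C p := hx ▸ rfl
  have hxr : x ∈ botSel i C (revProfile p) := hrev ▸ rfl
  obtain ⟨hp, hr⟩ := hC.eq_univ_of_mem_of_mem hxp.1 hxr.1
  have : Nontrivial (Fin n) := Fin.nontrivial_iff_two_le.mpr hn
  refine not_subsingleton (Fin n) (subsingleton_of_best_of_worst (q := p i) (x := x) ?_ ?_)
  · exact fun y => (prefGE_revProfile p i y x).mp (hxr.2 y (hr ▸ trivial))
  · exact fun y => hxp.2 y (hp ▸ trivial)

end ImmuneType3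

theorem statement19_general {n h : ℕ} (hn : 2 ≤ n)
    (i : Fin h) (C : SCC n h)
    (h3 : ∀ p : Profile n h, (C p ∩ C (revProfile p)).Nonempty → C p = Set.univ) :
    Immune (topSel i C) ∧ Immune (botSel i C) :=
  ⟨ImmuneType3.immune_topSel h3 hn i, ImmuneType3.immune_botSel h3 hn i⟩

/-- Proposition `type3`: if `C` is immune to the reversal bias of
type 3, then both `C^i` (ties broken by the best alternatives of individual `i`) and
`C_i` (ties broken by the worst alternatives of individual `i`) are immune to the
reversal bias. -/
theorem statement19 {n h : ℕ} (hh : 2 ≤ h) (hn : 2 ≤ n)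
    (i : Fin h) (C : SCC n h) (hC : IsSCC C)
    (h3 : ∀ p : Profile n h, (C p ∩ C (revProfile p)).Nonempty → C p = Set.univ) :
    Immune (topSel i C) ∧ Immune (botSel i C) :=
  statement19_general hn i C h3
end
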